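/- arXiv:1003.5276 — 3 statements merged into one kernel-verified Lean document; each statement's English description precedes it below -/
import Mathlib

section
/- Let H ∈ (0,1) and K ≥ 0, and define p(x,t) = 2 ∫₀^∞ g(x; s t^{2K}) g(s; t^{2H}) ds. Then for all x ≠ 0 and t > 0, p satisfies the fourth-order equation t ∂p/∂t = −K ∂/∂x ( x p ) + (H/4) t^{4K+2H} ∂⁴p/∂x⁴. -/
open Real Set

/-- Centered Gaussian density with variance `v`:
`g(x; v) = (2πv)^{-1/2} exp(−x²/(2v))`. -/
noncomputable def gauss (x v : ℝ) : ℝ :=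
  (Real.sqrt (2 * Real.pi * v))⁻¹ * Real.exp (-x ^ 2 / (2 * v))

/-- Density of `L_F(t) = t^K B¹(|B²_H(t)|)`:
`p(x,t) = 2 ∫₀^∞ g(x; s t^{2K}) g(s; t^{2H}) ds`. -/
noncomputable def densLF (H K x t : ℝ) : ℝ :=
  2 * ∫ s in Set.Ioi (0 : ℝ), gauss x (s * t ^ (2 * K)) * gauss s (t ^ (2 * H))

open MeasureTheory Filter Metric Topology


noncomputable def hh (y u : ℝ) : ℝ :=
  (2 * π)⁻¹ * (Real.sqrt u)⁻¹ * Real.exp (-(y ^ 2 / (2 * u)) - u ^ 2 / 2)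

lemma hh_nonneg (y u : ℝ) : 0 ≤ hh y u := by
  unfold hh
  positivity

lemma gauss_mul_eq_hh {y u : ℝ} (hu : 0 < u) :
    (Real.sqrt (2 * Real.pi * u))⁻¹ * Real.exp (-y ^ 2 / (2 * u)) *
      ((Real.sqrt (2 * Real.pi * 1))⁻¹ * Real.exp (-u ^ 2 / (2 * 1))) = hh y u := by
  have h2p : (0:ℝ) < 2 * π := by positivity
  have hs : Real.sqrt (2 * π * u) * Real.sqrt (2 * π * 1) = 2 * π * Real.sqrt u := by
    rw [mul_one, ← Real.sqrt_mul (by positivity) (2*π),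
      show 2 * π * u * (2 * π) = (2*π)^2 * u by ring, Real.sqrt_mul (by positivity) u,
      Real.sqrt_sq (by positivity)]
  unfold hh
  rw [show (Real.sqrt (2 * Real.pi * u))⁻¹ * Real.exp (-y ^ 2 / (2 * u)) *
      ((Real.sqrt (2 * Real.pi * 1))⁻¹ * (Real.exp (-u ^ 2 / (2 * 1)))) =
      (Real.sqrt (2 * π * u) * Real.sqrt (2 * π * 1))⁻¹ *
      (Real.exp (-y ^ 2 / (2 * u)) * Real.exp (-u ^ 2 / (2 * 1))) by
        rw [mul_inv]; ring]
  rw [hs, ← Real.exp_add, mul_inv,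
    show -y ^ 2 / (2 * u) + -u ^ 2 / (2 * 1) = -(y ^ 2 / (2 * u)) - u ^ 2 / 2 by ring]

lemma sqrt_inv_le {u : ℝ} (hu : 0 < u) : (Real.sqrt u)⁻¹ ≤ 1 + u⁻¹ := by
  have hs : 0 < Real.sqrt u := Real.sqrt_pos.2 hu
  rw [inv_le_iff_one_le_mul₀ hs]
  have h1 : Real.sqrt u * Real.sqrt u = u := Real.mul_self_sqrt hu.le
  have : (1 + u⁻¹) * Real.sqrt u = Real.sqrt u + (Real.sqrt u)⁻¹ := by
    field_simp
    nlinarith [hs]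
  rw [this]
  nlinarith [sq_nonneg (Real.sqrt u - 1), inv_pos.2 hs, mul_inv_cancel₀ hs.ne',
    sq_nonneg (Real.sqrt u - 1)]

lemma le_exp_self (x : ℝ) (hx : 0 ≤ x) : x ≤ Real.exp x := by
  nlinarith [Real.add_one_le_exp x]

/-- `(1+v)^5 * exp(-(a*v)) ≤ (1+5/a)^5` for `a > 0`, `v ≥ 0`. -/
lemma poly_exp_bound {a v : ℝ} (ha : 0 < a) (hv : 0 ≤ v) :
    (1 + v) ^ 5 * Real.exp (-(a * v)) ≤ (1 + 5 / a) ^ 5 := by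
  have h1 : 1 + v ≤ (1 + 5 / a) * Real.exp (a * v / 5) := by
    have hx : a * v / 5 ≤ Real.exp (a * v / 5) := le_exp_self _ (by positivity)
    have hv' : v ≤ 5 / a * Real.exp (a * v / 5) := by
      rw [div_mul_eq_mul_div, le_div_iff₀ ha]
      linarith
    have he1 : (1:ℝ) ≤ Real.exp (a * v / 5) := Real.one_le_exp (by positivity)
    calc 1 + v ≤ Real.exp (a * v / 5) + 5 / a * Real.exp (a * v / 5) := by linarith
      _ = (1 + 5 / a) * Real.exp (a * v / 5) := by ring
  have h2 : (1 + v) ^ 5 ≤ ((1 + 5 / a) * Real.exp (a * v / 5)) ^ 5 :=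
    pow_le_pow_left₀ (by linarith) h1 5
  have h3 : ((1 + 5 / a) * Real.exp (a * v / 5)) ^ 5
      = (1 + 5 / a) ^ 5 * Real.exp (a * v) := by
    rw [mul_pow, ← Real.exp_nat_mul]
    congr 1
    ring
  calc (1 + v) ^ 5 * Real.exp (-(a * v))
      ≤ (1 + 5 / a) ^ 5 * Real.exp (a * v) * Real.exp (-(a * v)) := by
        apply mul_le_mul_of_nonneg_right _ (Real.exp_nonneg _)
        rw [← h3]; exact h2
    _ = (1 + 5 / a) ^ 5 := by rw [mul_assoc, ← Real.exp_add]; simp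

lemma hh_le {ε y u : ℝ} (hε : 0 < ε) (hy : ε ≤ |y|) (hu : 0 < u) :
    hh y u ≤ (2 * π)⁻¹ * (1 + u⁻¹) * (Real.exp (-(ε ^ 2 / 2 * u⁻¹)) * Real.exp (-(u ^ 2 / 2))) := by
  unfold hh
  have hexp : Real.exp (-(y ^ 2 / (2 * u)) - u ^ 2 / 2)
      ≤ Real.exp (-(ε ^ 2 / 2 * u⁻¹)) * Real.exp (-(u ^ 2 / 2)) := by
    rw [← Real.exp_add]
    apply Real.exp_le_exp.2
    have h1 : ε ^ 2 ≤ y ^ 2 := by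
      have := sq_abs y
      nlinarith [abs_nonneg y]
    have h2 : ε ^ 2 / 2 * u⁻¹ ≤ y ^ 2 / (2 * u) := by
      rw [div_mul_eq_mul_div, div_le_div_iff₀ (by positivity) (by positivity)]
      calc ε ^ 2 * u⁻¹ * (2 * u) = 2 * ε ^ 2 * (u⁻¹ * u) := by ring
        _ = 2 * ε ^ 2 := by rw [inv_mul_cancel₀ hu.ne']; ring
        _ ≤ 2 * y ^ 2 := by linarith
        _ = y ^ 2 * 2 := by ring
    linarith
  calc (2 * π)⁻¹ * (Real.sqrt u)⁻¹ * Real.exp (-(y ^ 2 / (2 * u)) - u ^ 2 / 2)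
      ≤ (2 * π)⁻¹ * (1 + u⁻¹) * (Real.exp (-(ε ^ 2 / 2 * u⁻¹)) * Real.exp (-(u ^ 2 / 2))) := by
        apply mul_le_mul
        · apply mul_le_mul_of_nonneg_left (sqrt_inv_le hu) (by positivity)
        · exact hexp
        · positivity
        · positivity

/-- Master constant. -/
noncomputable def Cb (ε M : ℝ) : ℝ :=
  10 * (1 + M ^ 2) ^ 2 * (2 * π)⁻¹ * (1 + 5 / (ε ^ 2 / 2)) ^ 5

lemma Cb_nonneg (ε M : ℝ) : 0 ≤ Cb ε M := by
  unfold Cb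
  have := Real.pi_pos
  positivity

/-- Master domination: any coefficient bounded by `10(1+y²)²(1+u⁻¹)⁴` gives an
integrand dominated by `Cb ε M * exp(-u²/2)`. -/
lemma master_bound {ε M y u d : ℝ} (hε : 0 < ε) (hy : ε ≤ |y|) (hyM : |y| ≤ M) (hu : 0 < u)
    (hd : |d| ≤ 10 * (1 + y ^ 2) ^ 2 * (1 + u⁻¹) ^ 4) :
    |d * hh y u| ≤ Cb ε M * Real.exp (-(u ^ 2 / 2)) := by
  have hv : (0:ℝ) ≤ u⁻¹ := by positivity
  have hyM2 : (1 + y ^ 2) ^ 2 ≤ (1 + M ^ 2) ^ 2 := by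
    have h1 : y ^ 2 ≤ M ^ 2 := by
      have := sq_abs y; have := sq_abs M
      nlinarith [abs_nonneg y]
    nlinarith [sq_nonneg y]
  have ha : (0:ℝ) < ε ^ 2 / 2 := by positivity
  rw [abs_mul, abs_of_nonneg (hh_nonneg y u)]
  calc |d| * hh y u
      ≤ (10 * (1 + y ^ 2) ^ 2 * (1 + u⁻¹) ^ 4) *
        ((2 * π)⁻¹ * (1 + u⁻¹) * (Real.exp (-(ε ^ 2 / 2 * u⁻¹)) * Real.exp (-(u ^ 2 / 2)))) := by
        apply mul_le_mul hd (hh_le hε hy hu) (hh_nonneg y u)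
        positivity
    _ = 10 * (1 + y ^ 2) ^ 2 * (2 * π)⁻¹ *
        ((1 + u⁻¹) ^ 5 * Real.exp (-(ε ^ 2 / 2 * u⁻¹))) * Real.exp (-(u ^ 2 / 2)) := by ring
    _ ≤ 10 * (1 + M ^ 2) ^ 2 * (2 * π)⁻¹ *
        ((1 + 5 / (ε ^ 2 / 2)) ^ 5) * Real.exp (-(u ^ 2 / 2)) := by
        apply mul_le_mul_of_nonneg_right _ (Real.exp_nonneg _)
        have hp := poly_exp_bound ha hv
        have h2pi : (0:ℝ) ≤ (2 * π)⁻¹ := by have := Real.pi_pos; positivity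
        apply mul_le_mul _ hp (by positivity) (by positivity)
        apply mul_le_mul_of_nonneg_right _ h2pi
        nlinarith [sq_nonneg y, sq_nonneg M]
    _ = Cb ε M * Real.exp (-(u ^ 2 / 2)) := by unfold Cb; ring

lemma integrableOn_exp_bound (C : ℝ) :
    IntegrableOn (fun u : ℝ => C * Real.exp (-(u ^ 2 / 2))) (Ioi 0) := by
  apply Integrable.integrableOn
  have : (fun u : ℝ => C * Real.exp (-(u ^ 2 / 2))) =
      fun u : ℝ => C * Real.exp (-(1/2 : ℝ) * u ^ 2) := by
    funext u; ring_nf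
  rw [this]
  exact (integrable_exp_neg_mul_sq (by norm_num)).const_mul C

lemma contOn_hh (y : ℝ) : ContinuousOn (fun u : ℝ => hh y u) (Ioi 0) := by
  unfold hh
  apply ContinuousOn.mul
  · apply continuousOn_const.mul
    exact Real.continuous_sqrt.continuousOn.inv₀
      (fun u hu => (Real.sqrt_pos.2 hu).ne')
  · apply ContinuousOn.rexp
    apply ContinuousOn.sub
    · apply ContinuousOn.neg
      exact continuousOn_const.div (by fun_prop) (fun u hu => by
        have : (0:ℝ) < u := hu
        positivity)
    · fun_prop

lemma contOn_div_pow (c : ℝ) (n : ℕ) :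
    ContinuousOn (fun u : ℝ => c / u ^ n) (Ioi 0) :=
  continuousOn_const.div (by fun_prop) (fun u hu => pow_ne_zero n (ne_of_gt hu))

lemma prod_le {a b A B : ℝ} (ha : 0 ≤ a) (hb : 0 ≤ b) (hA : a ≤ A) (hB : b ≤ B) :
    a * b ≤ A * B := mul_le_mul hA hB hb (le_trans ha hA)

lemma v_pows {v : ℝ} (hv : 0 ≤ v) :
    (1:ℝ) ≤ (1+v)^4 ∧ v ≤ (1+v)^4 ∧ v^2 ≤ (1+v)^4 ∧ v^3 ≤ (1+v)^4 ∧ v^4 ≤ (1+v)^4 := by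
  have hexp : (1+v)^4 = 1+4*v+6*v^2+4*v^3+v^4 := by ring
  have h2 : (0:ℝ) ≤ v^2 := by positivity
  have h3 : (0:ℝ) ≤ v^3 := by positivity
  have h4 : (0:ℝ) ≤ v^4 := by positivity
  refine ⟨by nlinarith, by nlinarith, by nlinarith, by nlinarith, by nlinarith⟩

lemma y_pows (y : ℝ) :
    (1:ℝ) ≤ (1+y^2)^2 ∧ |y| ≤ (1+y^2)^2 ∧ y^2 ≤ (1+y^2)^2 ∧
      |y|^3 ≤ (1+y^2)^2 ∧ y^4 ≤ (1+y^2)^2 := by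
  have h := sq_abs y
  have h0 := abs_nonneg y
  have hexp : (1+y^2)^2 = 1 + 2*|y|^2 + |y|^4 := by rw [sq_abs]; nlinarith [sq_abs y]
  refine ⟨by nlinarith, by nlinarith [sq_nonneg (|y|-1), sq_nonneg (|y|^2-1)],
    by nlinarith, by nlinarith [sq_nonneg (|y|^2-|y|), sq_nonneg (|y|-1)],
    by nlinarith [sq_abs y]⟩

-- coefficient bounds
lemma bound_d0 (y u : ℝ) (hu : 0 < u) : |(1:ℝ)| ≤ 10 * (1+y^2)^2 * (1+u⁻¹)^4 := by
  have hv := v_pows (v := u⁻¹) (by positivity)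
  have hy := y_pows y
  rw [abs_one]
  nlinarith [hv.1, hy.1]

lemma bound_d1 (y u : ℝ) (hu : 0 < u) :
    |(-(y/u))| ≤ 10 * (1+y^2)^2 * (1+u⁻¹)^4 := by
  have hv := v_pows (v := u⁻¹) (by positivity)
  have hy := y_pows y
  have h1 : |(-(y/u))| = |y| * u⁻¹ := by
    rw [abs_neg, abs_div, abs_of_pos hu, div_eq_mul_inv]
  rw [h1]
  have := prod_le (abs_nonneg y) (by positivity : (0:ℝ) ≤ u⁻¹) hy.2.1 hv.2.1
  nlinarith [this, hy.1, hv.1]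

lemma bound_d2 (y u : ℝ) (hu : 0 < u) :
    |y^2/u^2 - 1/u| ≤ 10 * (1+y^2)^2 * (1+u⁻¹)^4 := by
  have hv := v_pows (v := u⁻¹) (by positivity)
  have hy := y_pows y
  have h1 : |y^2/u^2 - 1/u| ≤ y^2 * (u⁻¹)^2 + u⁻¹ := by
    calc |y^2/u^2 - 1/u| ≤ |y^2/u^2| + |1/u| := abs_sub _ _
      _ = y^2 * (u⁻¹)^2 + u⁻¹ := by
          rw [abs_div, abs_div, abs_of_pos (pow_pos hu 2), abs_of_pos hu]
          rw [abs_of_nonneg (sq_nonneg y), abs_one]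
          rw [div_eq_mul_inv, inv_pow, one_div]
  have h2 := prod_le (sq_nonneg y) (by positivity : (0:ℝ) ≤ (u⁻¹)^2) hy.2.2.1 hv.2.2.1
  nlinarith [h1, h2, hv.2.1, hy.1, hv.1]

lemma bound_d3 (y u : ℝ) (hu : 0 < u) :
    |(-(y^3/u^3) + 3*y/u^2)| ≤ 10 * (1+y^2)^2 * (1+u⁻¹)^4 := by
  have hv := v_pows (v := u⁻¹) (by positivity)
  have hy := y_pows y
  have h1 : |(-(y^3/u^3) + 3*y/u^2)| ≤ |y|^3 * (u⁻¹)^3 + 3 * (|y| * (u⁻¹)^2) := by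
    calc |(-(y^3/u^3) + 3*y/u^2)| ≤ |(-(y^3/u^3))| + |3*y/u^2| := abs_add_le _ _
      _ = |y|^3 * (u⁻¹)^3 + 3 * (|y| * (u⁻¹)^2) := by
          rw [abs_neg, abs_div, abs_div, abs_of_pos (pow_pos hu 3),
            abs_of_pos (pow_pos hu 2), abs_pow, abs_mul, abs_of_nonneg (by norm_num : (0:ℝ) ≤ 3)]
          rw [div_eq_mul_inv, div_eq_mul_inv, inv_pow, inv_pow]
          ring
  have h2 := prod_le (by positivity : (0:ℝ) ≤ |y|^3) (by positivity : (0:ℝ) ≤ (u⁻¹)^3)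
    hy.2.2.2.1 hv.2.2.2.1
  have h3 := prod_le (abs_nonneg y) (by positivity : (0:ℝ) ≤ (u⁻¹)^2) hy.2.1 hv.2.2.1
  nlinarith [h1, h2, h3]

lemma bound_d4 (y u : ℝ) (hu : 0 < u) :
    |y^4/u^4 - 6*y^2/u^3 + 3/u^2| ≤ 10 * (1+y^2)^2 * (1+u⁻¹)^4 := by
  have hv := v_pows (v := u⁻¹) (by positivity)
  have hy := y_pows y
  have h1 : |y^4/u^4 - 6*y^2/u^3 + 3/u^2|
      ≤ y^4 * (u⁻¹)^4 + 6 * (y^2 * (u⁻¹)^3) + 3 * (u⁻¹)^2 := by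
    calc |y^4/u^4 - 6*y^2/u^3 + 3/u^2| ≤ |y^4/u^4 - 6*y^2/u^3| + |3/u^2| := abs_add_le _ _
      _ ≤ |y^4/u^4| + |6*y^2/u^3| + |3/u^2| := by
          have := abs_sub (y^4/u^4) (6*y^2/u^3)
          linarith
      _ = y^4 * (u⁻¹)^4 + 6 * (y^2 * (u⁻¹)^3) + 3 * (u⁻¹)^2 := by
          rw [abs_div, abs_div, abs_div, abs_of_pos (pow_pos hu 4),
            abs_of_pos (pow_pos hu 3), abs_of_pos (pow_pos hu 2),
            abs_of_nonneg (by positivity : (0:ℝ) ≤ y^4), abs_mul,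
            abs_of_nonneg (by norm_num : (0:ℝ) ≤ 6), abs_of_nonneg (sq_nonneg y),
            abs_of_nonneg (by norm_num : (0:ℝ) ≤ 3)]
          rw [div_eq_mul_inv, div_eq_mul_inv, div_eq_mul_inv, inv_pow, inv_pow, inv_pow]
          ring
  have h2 := prod_le (by positivity : (0:ℝ) ≤ y^4) (by positivity : (0:ℝ) ≤ (u⁻¹)^4)
    hy.2.2.2.2 hv.2.2.2.2
  have h3 := prod_le (sq_nonneg y) (by positivity : (0:ℝ) ≤ (u⁻¹)^3) hy.2.2.1 hv.2.2.2.1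
  nlinarith [h1, h2, h3, hv.2.2.1, hy.1]

-- pointwise derivative in y
lemma hasDerivAt_hh_y {u : ℝ} (hu : 0 < u) (y : ℝ) :
    HasDerivAt (fun z => hh z u) ((-(y/u)) * hh y u) y := by
  have h1 : HasDerivAt (fun z : ℝ => -(z^2/(2*u)) - u^2/2) (-(y/u)) y := by
    have hp : HasDerivAt (fun z : ℝ => z^2) (2*y) y := by
      simpa using (hasDerivAt_pow 2 y)
    have h2 := (hp.div_const (2*u)).neg.sub_const (u^2/2)
    refine h2.congr_deriv ?_
    field_simp
  have h3 := (h1.exp).const_mul ((2*π)⁻¹ * (Real.sqrt u)⁻¹)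
  unfold hh
  exact h3.congr_deriv (by ring)

lemma hasDerivAt_coef_mul {u : ℝ} (hu : 0 < u) (y : ℝ) {P : ℝ → ℝ} {p' : ℝ}
    (hP : HasDerivAt P p' y) :
    HasDerivAt (fun z => P z * hh z u) ((p' - P y * (y/u)) * hh y u) y := by
  have := hP.mul (hasDerivAt_hh_y hu y)
  exact this.congr_deriv (by ring)

lemma integrableOn_coef_hh {d : ℝ → ℝ} {y : ℝ} (hy : y ≠ 0)
    (hcont : ContinuousOn (fun u => d u * hh y u) (Ioi 0))
    (hb : ∀ u, 0 < u → |d u| ≤ 10 * (1+y^2)^2 * (1+u⁻¹)^4) :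
    IntegrableOn (fun u => d u * hh y u) (Ioi 0) := by
  have hε : 0 < |y| := abs_pos.2 hy
  apply Integrable.mono' (integrableOn_exp_bound (Cb |y| |y|))
  · exact hcont.aestronglyMeasurable measurableSet_Ioi
  · rw [ae_restrict_iff' measurableSet_Ioi]
    filter_upwards with u hu
    have := master_bound hε le_rfl le_rfl hu (hb u hu)
    rw [Real.norm_eq_abs]
    exact this

lemma hasDerivAt_integral_hh (p Dp : ℝ → ℝ → ℝ) (y₀ : ℝ) (hy₀ : y₀ ≠ 0)
    (hderiv : ∀ y u : ℝ, 0 < u → HasDerivAt (fun z => p z u * hh z u) (Dp y u * hh y u) y)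
    (hcontp : ∀ y : ℝ, ContinuousOn (fun u => p y u * hh y u) (Ioi 0))
    (hcontD : ∀ y : ℝ, ContinuousOn (fun u => Dp y u * hh y u) (Ioi 0))
    (hbp : ∀ y u : ℝ, 0 < u → |p y u| ≤ 10 * (1+y^2)^2 * (1+u⁻¹)^4)
    (hbD : ∀ y u : ℝ, 0 < u → |Dp y u| ≤ 10 * (1+y^2)^2 * (1+u⁻¹)^4) :
    HasDerivAt (fun y => ∫ u in Ioi 0, p y u * hh y u)
      (∫ u in Ioi 0, Dp y₀ u * hh y₀ u) y₀ := by
  have hay : 0 < |y₀| := abs_pos.2 hy₀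
  set ε : ℝ := |y₀| / 2 with hε_def
  have hε : 0 < ε := by positivity
  have hball : ∀ y ∈ ball y₀ ε, ε ≤ |y| ∧ |y| ≤ 2 * |y₀| := by
    intro y hy
    rw [mem_ball, Real.dist_eq] at hy
    constructor
    · have := abs_sub_abs_le_abs_sub y₀ y
      rw [abs_sub_comm] at this
      rw [hε_def]
      linarith [abs_nonneg (y - y₀)]
    · have := abs_sub_abs_le_abs_sub y y₀
      rw [hε_def] at hy
      linarith
  have key := hasDerivAt_integral_of_dominated_loc_of_deriv_le (μ := volume.restrict (Ioi 0))
    (F := fun y u => p y u * hh y u) (F' := fun y u => Dp y u * hh y u)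
    (x₀ := y₀) (s := ball y₀ ε)
    (bound := fun u => Cb ε (2 * |y₀|) * Real.exp (-(u^2/2))) (ball_mem_nhds y₀ hε)
    (Eventually.of_forall fun y => (hcontp y).aestronglyMeasurable measurableSet_Ioi)
    (integrableOn_coef_hh hy₀ (hcontp y₀) (hbp y₀))
    ((hcontD y₀).aestronglyMeasurable measurableSet_Ioi)
    ?_ ((integrableOn_exp_bound _)) ?_
  · exact key.2
  · rw [ae_restrict_iff' measurableSet_Ioi]
    filter_upwards with u hu
    intro y hy
    obtain ⟨h1, h2⟩ := hball y hy
    have := master_bound hε h1 h2 hu (hbD y u hu)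
    rw [Real.norm_eq_abs]
    exact this
  · rw [ae_restrict_iff' measurableSet_Ioi]
    filter_upwards with u hu
    intro y _
    exact hderiv y u hu

noncomputable def Q0 (y : ℝ) : ℝ := ∫ u in Ioi 0, hh y u
noncomputable def Q1 (y : ℝ) : ℝ := ∫ u in Ioi 0, (-(y/u)) * hh y u
noncomputable def Q2 (y : ℝ) : ℝ := ∫ u in Ioi 0, (y^2/u^2 - 1/u) * hh y u
noncomputable def Q3 (y : ℝ) : ℝ := ∫ u in Ioi 0, (-(y^3/u^3) + 3*y/u^2) * hh y u
noncomputable def Q4 (y : ℝ) : ℝ :=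
  ∫ u in Ioi 0, (y^4/u^4 - 6*y^2/u^3 + 3/u^2) * hh y u

-- coefficient continuity
lemma contOn_c1 (y : ℝ) : ContinuousOn (fun u : ℝ => -(y/u)) (Ioi 0) := by
  have := contOn_div_pow y 1
  simp only [pow_one] at this
  exact this.neg

lemma contOn_c2 (y : ℝ) : ContinuousOn (fun u : ℝ => y^2/u^2 - 1/u) (Ioi 0) := by
  have h1 := contOn_div_pow (y^2) 2
  have h2 := contOn_div_pow (1:ℝ) 1
  simp only [pow_one] at h2
  exact h1.sub h2

lemma contOn_c3 (y : ℝ) : ContinuousOn (fun u : ℝ => -(y^3/u^3) + 3*y/u^2) (Ioi 0) :=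
  ((contOn_div_pow (y^3) 3).neg).add (contOn_div_pow (3*y) 2)

lemma contOn_c4 (y : ℝ) :
    ContinuousOn (fun u : ℝ => y^4/u^4 - 6*y^2/u^3 + 3/u^2) (Ioi 0) :=
  ((contOn_div_pow (y^4) 4).sub (contOn_div_pow (6*y^2) 3)).add (contOn_div_pow 3 2)

-- concrete pointwise derivatives in y
lemma hd_01 (y u : ℝ) (hu : 0 < u) :
    HasDerivAt (fun z => (1:ℝ) * hh z u) ((-(y/u)) * hh y u) y := by
  have := hasDerivAt_coef_mul hu y (hasDerivAt_const y (1:ℝ))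
  convert this using 1
  ring

lemma hd_12 (y u : ℝ) (hu : 0 < u) :
    HasDerivAt (fun z => (-(z/u)) * hh z u) ((y^2/u^2 - 1/u) * hh y u) y := by
  have hP : HasDerivAt (fun z : ℝ => -(z/u)) (-(1/u)) y := by
    exact ((hasDerivAt_id y).div_const u).neg
  have := hasDerivAt_coef_mul hu y hP
  convert this using 1
  ring

lemma hd_23 (y u : ℝ) (hu : 0 < u) :
    HasDerivAt (fun z => (z^2/u^2 - 1/u) * hh z u)
      ((-(y^3/u^3) + 3*y/u^2) * hh y u) y := by
  have hP : HasDerivAt (fun z : ℝ => z^2/u^2 - 1/u) (2*y/u^2) y := by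
    have := ((hasDerivAt_pow 2 y).div_const (u^2)).sub_const (1/u)
    simpa using this
  have := hasDerivAt_coef_mul hu y hP
  convert this using 1
  ring

lemma hd_34 (y u : ℝ) (hu : 0 < u) :
    HasDerivAt (fun z => (-(z^3/u^3) + 3*z/u^2) * hh z u)
      ((y^4/u^4 - 6*y^2/u^3 + 3/u^2) * hh y u) y := by
  have hP : HasDerivAt (fun z : ℝ => -(z^3/u^3) + 3*z/u^2)
      (-(3*y^2/u^3) + 3/u^2) y := by
    have h1 := ((hasDerivAt_pow 3 y).div_const (u^3)).neg
    have h2 := ((hasDerivAt_id y).const_mul (3:ℝ)).div_const (u^2)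
    have := h1.add h2
    simp only [Nat.cast_ofNat, id_eq, mul_one] at this ⊢
    exact this
  have := hasDerivAt_coef_mul hu y hP
  convert this using 1
  ring

-- integrability of all integrands
lemma intQ0 {y : ℝ} (hy : y ≠ 0) : IntegrableOn (fun u => hh y u) (Ioi 0) := by
  have := integrableOn_coef_hh hy (d := fun _ => (1:ℝ))
    (by simpa using (contOn_hh y)) (fun u hu => bound_d0 y u hu)
  simpa using this

lemma intQ1 {y : ℝ} (hy : y ≠ 0) :
    IntegrableOn (fun u => (-(y/u)) * hh y u) (Ioi 0) :=
  integrableOn_coef_hh hy ((contOn_c1 y).mul (contOn_hh y)) (fun u hu => bound_d1 y u hu)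

lemma intQ4 {y : ℝ} (hy : y ≠ 0) :
    IntegrableOn (fun u => (y^4/u^4 - 6*y^2/u^3 + 3/u^2) * hh y u) (Ioi 0) :=
  integrableOn_coef_hh hy ((contOn_c4 y).mul (contOn_hh y)) (fun u hu => bound_d4 y u hu)

-- derivatives of the Q's
lemma hasDerivAt_Q0 {y : ℝ} (hy : y ≠ 0) : HasDerivAt Q0 (Q1 y) y := by
  have := hasDerivAt_integral_hh (fun _ _ => (1:ℝ)) (fun y u => -(y/u)) y hy
    (fun y u hu => hd_01 y u hu)
    (fun y => by simpa using contOn_hh y)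
    (fun y => (contOn_c1 y).mul (contOn_hh y))
    (fun y u hu => bound_d0 y u hu)
    (fun y u hu => bound_d1 y u hu)
  unfold Q0 Q1
  simp only [one_mul] at this
  exact this

lemma hasDerivAt_Q1 {y : ℝ} (hy : y ≠ 0) : HasDerivAt Q1 (Q2 y) y := by
  have := hasDerivAt_integral_hh (fun z u => -(z/u)) (fun y u => y^2/u^2 - 1/u) y hy
    (fun y u hu => hd_12 y u hu)
    (fun y => (contOn_c1 y).mul (contOn_hh y))
    (fun y => (contOn_c2 y).mul (contOn_hh y))
    (fun y u hu => bound_d1 y u hu)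
    (fun y u hu => bound_d2 y u hu)
  unfold Q1 Q2
  exact this

lemma hasDerivAt_Q2 {y : ℝ} (hy : y ≠ 0) : HasDerivAt Q2 (Q3 y) y := by
  have := hasDerivAt_integral_hh (fun z u => z^2/u^2 - 1/u)
    (fun y u => -(y^3/u^3) + 3*y/u^2) y hy
    (fun y u hu => hd_23 y u hu)
    (fun y => (contOn_c2 y).mul (contOn_hh y))
    (fun y => (contOn_c3 y).mul (contOn_hh y))
    (fun y u hu => bound_d2 y u hu)
    (fun y u hu => bound_d3 y u hu)
  unfold Q2 Q3
  exact this

lemma hasDerivAt_Q3 {y : ℝ} (hy : y ≠ 0) : HasDerivAt Q3 (Q4 y) y := by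
  have := hasDerivAt_integral_hh (fun z u => -(z^3/u^3) + 3*z/u^2)
    (fun y u => y^4/u^4 - 6*y^2/u^3 + 3/u^2) y hy
    (fun y u hu => hd_34 y u hu)
    (fun y => (contOn_c3 y).mul (contOn_hh y))
    (fun y => (contOn_c4 y).mul (contOn_hh y))
    (fun y u hu => bound_d3 y u hu)
    (fun y u hu => bound_d4 y u hu)
  unfold Q3 Q4
  exact this

-- derivative of hh in u
lemma hasDerivAt_hh_u {y u : ℝ} (hu : 0 < u) :
    HasDerivAt (fun v => hh y v) ((y^2/(2*u^2) - 1/(2*u) - u) * hh y u) u := by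
  have hs : Real.sqrt u ≠ 0 := (Real.sqrt_pos.2 hu).ne'
  have hsu : Real.sqrt u * Real.sqrt u = u := Real.mul_self_sqrt hu.le
  have h1 : HasDerivAt (fun v : ℝ => (Real.sqrt v)⁻¹)
      (-(1/(2*Real.sqrt u)) / (Real.sqrt u)^2) u :=
    (Real.hasDerivAt_sqrt hu.ne').inv hs
  have h2 : HasDerivAt (fun v : ℝ => -(y^2/(2*v)) - v^2/2) (y^2/(2*u^2) - u) u := by
    have e1 : (fun v : ℝ => -(y^2/(2*v)) - v^2/2)
        = fun v : ℝ => -(y^2/2 * v⁻¹) - v^2/2 := by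
      funext v; ring
    rw [e1]
    have hinv : HasDerivAt (fun v : ℝ => v⁻¹) (-(u^2)⁻¹) u := hasDerivAt_inv hu.ne'
    have h3 := ((hinv.const_mul (y^2/2)).neg).sub ((hasDerivAt_pow 2 u).div_const 2)
    refine h3.congr_deriv ?_
    norm_num
    field_simp
  have h4 := (h1.mul h2.exp).const_mul ((2*π)⁻¹)
  unfold hh
  have hsq : (Real.sqrt u)^2 = u := Real.sq_sqrt hu.le
  rw [hsq] at h4
  refine (h4.congr_deriv ?_).congr_of_eventuallyEq (Eventually.of_forall fun v => ?_)
  · ring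
  · simp only [Pi.mul_apply]; ring

-- derivative of φ = A·hh in u
lemma hasDerivAt_phi_aux {y u : ℝ} (hu : 0 < u) :
    HasDerivAt (fun v => (2*y^2/v^2 - 2/v) * hh y v)
      ((y^4/u^4 - 6*y^2/u^3 + 3/u^2 + 2 - 2*y^2/u) * hh y u) u := by
  have hA : HasDerivAt (fun v : ℝ => 2*y^2/v^2 - 2/v) (-(4*y^2/u^3) + 2/u^2) u := by
    have h1 := (hasDerivAt_const u (2*y^2)).div (hasDerivAt_pow 2 u)
      (pow_ne_zero 2 hu.ne')
    have h2 := (hasDerivAt_const u (2:ℝ)).div (hasDerivAt_id u) hu.ne'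
    have h3 := h1.sub h2
    refine h3.congr_deriv ?_
    norm_num
    field_simp
    ring
  have h := hA.mul (hasDerivAt_hh_u (y := y) hu)
  refine h.congr_deriv ?_
  field_simp
  ring

noncomputable def phi (y u : ℝ) : ℝ :=
  if 0 < u then (2*y^2/u^2 - 2/u) * hh y u else 0

lemma hasDerivAt_phi {y u : ℝ} (hu : 0 < u) :
    HasDerivAt (fun v => phi y v)
      ((y^4/u^4 - 6*y^2/u^3 + 3/u^2 + 2 - 2*y^2/u) * hh y u) u := by
  apply (hasDerivAt_phi_aux hu).congr_of_eventuallyEq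
  filter_upwards [isOpen_Ioi.mem_nhds hu] with v hv
  have hv' : (0:ℝ) < v := hv
  simp only [phi, if_pos hv']

lemma bound_dA (y u : ℝ) (hu : 0 < u) :
    |2*y^2/u^2 - 2/u| ≤ 10 * (1+y^2)^2 * (1+u⁻¹)^4 := by
  have hv := v_pows (v := u⁻¹) (by positivity)
  have hy := y_pows y
  have h1 : |2*y^2/u^2 - 2/u| ≤ 2 * (y^2 * (u⁻¹)^2) + 2 * u⁻¹ := by
    calc |2*y^2/u^2 - 2/u| ≤ |2*y^2/u^2| + |2/u| := abs_sub _ _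
      _ = 2 * (y^2 * (u⁻¹)^2) + 2 * u⁻¹ := by
        rw [abs_div, abs_div, abs_of_pos (pow_pos hu 2), abs_of_pos hu, abs_mul,
          abs_of_nonneg (by norm_num : (0:ℝ) ≤ 2), abs_of_nonneg (sq_nonneg y)]
        ring
  have h2 := prod_le (sq_nonneg y) (by positivity : (0:ℝ) ≤ (u⁻¹)^2) hy.2.2.1 hv.2.2.1
  nlinarith [h1, h2, hv.2.1, hy.1, hv.1]

lemma tendsto_pow_exp_k (k : ℕ) {a : ℝ} (ha : 0 < a) :
    Tendsto (fun v : ℝ => v^k * Real.exp (-(a*v))) atTop (𝓝 0) := by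
  have h := tendsto_pow_mul_exp_neg_atTop_nhds_zero k
  have hc : Tendsto (fun v : ℝ => a * v) atTop atTop :=
    Tendsto.const_mul_atTop ha tendsto_id
  have hcomp := h.comp hc
  have he : (fun v : ℝ => v^k * Real.exp (-(a*v)))
      = fun v => (a⁻¹)^k * ((a*v)^k * Real.exp (-(a*v))) := by
    funext v
    rw [show (a⁻¹)^k * ((a*v)^k * Real.exp (-(a*v)))
        = (a⁻¹*a)^k * (v^k * Real.exp (-(a*v))) by ring,
      inv_mul_cancel₀ ha.ne', one_pow, one_mul]
  rw [he]
  have := hcomp.const_mul ((a:ℝ)⁻¹^k)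
  simpa using this

lemma tendsto_one_add_cube_exp {a : ℝ} (ha : 0 < a) :
    Tendsto (fun v : ℝ => (1+v)^3 * Real.exp (-(a*v))) atTop (𝓝 0) := by
  have h0 := tendsto_pow_exp_k 0 ha
  have h1 := tendsto_pow_exp_k 1 ha
  have h2 := tendsto_pow_exp_k 2 ha
  have h3 := tendsto_pow_exp_k 3 ha
  have hsum := ((h0.add (h1.const_mul 3)).add (h2.const_mul 3)).add h3
  norm_num at hsum
  apply hsum.congr
  intro v
  ring

lemma tendsto_phi_atTop {y : ℝ} (hy : y ≠ 0) :
    Tendsto (fun u => phi y u) atTop (𝓝 0) := by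
  have hay : 0 < |y| := abs_pos.2 hy
  apply squeeze_zero_norm' (a := fun u => Cb |y| |y| * Real.exp (-(u^2/2)))
  · filter_upwards [eventually_gt_atTop (0:ℝ)] with u hu
    have hb := master_bound hay le_rfl le_rfl hu (bound_dA y u hu)
    rw [Real.norm_eq_abs]
    simp only [phi, if_pos hu]
    exact hb
  · have hsq : Tendsto (fun u : ℝ => u^2/2) atTop atTop :=
      Tendsto.atTop_div_const (by norm_num)
        (tendsto_pow_atTop (n := 2) (by norm_num) : Tendsto (fun u : ℝ => u^2) atTop atTop)
    have h1 : Tendsto (fun u : ℝ => -(u^2/2)) atTop atBot :=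
      tendsto_neg_atTop_atBot.comp hsq
    have h2 := Real.tendsto_exp_atBot.comp h1
    have := h2.const_mul (Cb |y| |y|)
    simpa using this

lemma bound_dA' (y u : ℝ) (hu : 0 < u) :
    |2*y^2/u^2 - 2/u| ≤ 2*y^2*(u⁻¹)^2 + 2*u⁻¹ := by
  calc |2*y^2/u^2 - 2/u| ≤ |2*y^2/u^2| + |2/u| := abs_sub _ _
    _ = 2*y^2*(u⁻¹)^2 + 2*u⁻¹ := by
      rw [abs_div, abs_div, abs_of_pos (pow_pos hu 2), abs_of_pos hu, abs_mul,
        abs_of_nonneg (by norm_num : (0:ℝ) ≤ 2), abs_of_nonneg (sq_nonneg y)]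
      ring

lemma tendsto_phi_zero {y : ℝ} (hy : y ≠ 0) :
    Tendsto (fun u => phi y u) (𝓝[>] (0:ℝ)) (𝓝 0) := by
  have hay : 0 < |y| := abs_pos.2 hy
  have ha : (0:ℝ) < y^2/2 := by positivity
  set C : ℝ := 2*y^2 + 2 with hC
  have hC0 : (0:ℝ) < C := by positivity
  -- the comparison function
  have hcomp : Tendsto (fun u : ℝ => C * ((1+u⁻¹)^3 * Real.exp (-(y^2/2 * u⁻¹))))
      (𝓝[>] (0:ℝ)) (𝓝 0) := by
    have h1 : Tendsto (fun v : ℝ => C * ((1+v)^3 * Real.exp (-(y^2/2 * v))))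
        atTop (𝓝 0) := by
      have := (tendsto_one_add_cube_exp ha).const_mul C
      simpa using this
    exact h1.comp tendsto_inv_nhdsGT_zero
  apply squeeze_zero_norm' ?_ hcomp
  filter_upwards [self_mem_nhdsWithin] with u hu
  have hu' : (0:ℝ) < u := hu
  have hv : (0:ℝ) ≤ u⁻¹ := by positivity
  simp only [phi, if_pos hu', Real.norm_eq_abs]
  have hle := hh_le (ε := |y|) hay le_rfl hu'
  have hA := bound_dA' y u hu'
  calc |(2*y^2/u^2 - 2/u) * hh y u| = |2*y^2/u^2 - 2/u| * hh y u := by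
        rw [abs_mul, abs_of_nonneg (hh_nonneg y u)]
    _ ≤ (2*y^2*(u⁻¹)^2 + 2*u⁻¹) *
        ((2*π)⁻¹ * (1+u⁻¹) * (Real.exp (-(|y|^2/2 * u⁻¹)) * Real.exp (-(u^2/2)))) := by
        apply mul_le_mul hA hle (hh_nonneg y u)
        positivity
    _ ≤ C * ((1+u⁻¹)^3 * Real.exp (-(y^2/2 * u⁻¹))) := by
        rw [sq_abs]
        have he1 : Real.exp (-(u^2/2)) ≤ 1 := Real.exp_le_one_iff.2 (by nlinarith [sq_nonneg u])
        have hpi : (2*π)⁻¹ ≤ 1 := by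
          rw [inv_le_one_iff₀]
          right
          nlinarith [Real.pi_gt_three]
        have hq : 2*y^2*(u⁻¹)^2 + 2*u⁻¹ ≤ C * (1+u⁻¹)^2 := by
          rw [hC]
          nlinarith [sq_nonneg u⁻¹, sq_nonneg y, mul_nonneg (mul_nonneg (by norm_num : (0:ℝ) ≤ 2) (sq_nonneg y)) hv]
        have hE : (0:ℝ) ≤ Real.exp (-(y^2/2 * u⁻¹)) := Real.exp_nonneg _
        calc (2*y^2*(u⁻¹)^2 + 2*u⁻¹) *
            ((2*π)⁻¹ * (1+u⁻¹) * (Real.exp (-(y^2/2 * u⁻¹)) * Real.exp (-(u^2/2))))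
            ≤ (C * (1+u⁻¹)^2) * (1 * (1+u⁻¹) * (Real.exp (-(y^2/2 * u⁻¹)) * 1)) := by
              apply mul_le_mul hq _ (by positivity) (by positivity)
              apply mul_le_mul _ _ (by positivity) (by positivity)
              · apply mul_le_mul hpi le_rfl (by positivity) (by norm_num)
              · apply mul_le_mul le_rfl he1 (Real.exp_nonneg _) hE
          _ = C * ((1+u⁻¹)^2 * (1+u⁻¹) * Real.exp (-(y^2/2 * u⁻¹))) := by ring
          _ = C * ((1+u⁻¹)^3 * Real.exp (-(y^2/2 * u⁻¹))) := by ring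


lemma continuousWithinAt_phi {y : ℝ} (hy : y ≠ 0) :
    ContinuousWithinAt (fun u => phi y u) (Ici (0:ℝ)) 0 := by
  have h0 : phi y 0 = 0 := by simp [phi]
  have hpure : Tendsto (fun u => phi y u) (pure 0) (𝓝 (0:ℝ)) := by
    have := tendsto_pure_nhds (fun u => phi y u) 0
    rwa [h0] at this
  rw [ContinuousWithinAt, h0, ← Set.Ioi_insert, nhdsWithin_insert, tendsto_sup]
  exact ⟨hpure, tendsto_phi_zero hy⟩

lemma integrableOn_T {y : ℝ} (hy : y ≠ 0) :
    IntegrableOn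
      (fun u => (y^4/u^4 - 6*y^2/u^3 + 3/u^2 + 2 - 2*y^2/u) * hh y u) (Ioi 0) := by
  have he : (fun u : ℝ => (y^4/u^4 - 6*y^2/u^3 + 3/u^2 + 2 - 2*y^2/u) * hh y u)
      = fun u => ((y^4/u^4 - 6*y^2/u^3 + 3/u^2) * hh y u + 2 * hh y u)
        + 2*y*((-(y/u)) * hh y u) := by
    funext u; ring
  rw [he]
  exact ((intQ4 hy).add ((intQ0 hy).const_mul 2)).add ((intQ1 hy).const_mul (2*y))

lemma integral_T_zero {y : ℝ} (hy : y ≠ 0) :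
    ∫ u in Ioi (0:ℝ), (y^4/u^4 - 6*y^2/u^3 + 3/u^2 + 2 - 2*y^2/u) * hh y u = 0 := by
  have h := integral_Ioi_of_hasDerivAt_of_tendsto (a := 0) (f := fun u => phi y u)
    (f' := fun u => (y^4/u^4 - 6*y^2/u^3 + 3/u^2 + 2 - 2*y^2/u) * hh y u) (m := 0)
    (continuousWithinAt_phi hy) (fun u hu => hasDerivAt_phi (mem_Ioi.1 hu))
    (integrableOn_T hy) (tendsto_phi_atTop hy)
  simpa [phi] using h

lemma Q_ode {y : ℝ} (hy : y ≠ 0) : Q4 y = -2 * Q0 y - 2*y*Q1 y := by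
  have he : (fun u : ℝ => (y^4/u^4 - 6*y^2/u^3 + 3/u^2 + 2 - 2*y^2/u) * hh y u)
      = fun u => ((y^4/u^4 - 6*y^2/u^3 + 3/u^2) * hh y u + 2 * hh y u)
        + 2*y*((-(y/u)) * hh y u) := by
    funext u; ring
  have hz := integral_T_zero hy
  rw [he] at hz
  have hAB : IntegrableOn
      (fun u : ℝ => (y^4/u^4 - 6*y^2/u^3 + 3/u^2) * hh y u + 2 * hh y u) (Ioi 0) :=
    (intQ4 hy).add ((intQ0 hy).const_mul 2)
  rw [integral_add hAB ((intQ1 hy).const_mul (2*y)),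
    integral_add (intQ4 hy) ((intQ0 hy).const_mul 2),
    integral_const_mul, integral_const_mul] at hz
  have e0 : Q0 y = ∫ u in Ioi (0:ℝ), hh y u := rfl
  have e1 : Q1 y = ∫ u in Ioi (0:ℝ), (-(y/u)) * hh y u := rfl
  have e4 : Q4 y = ∫ u in Ioi (0:ℝ), (y^4/u^4 - 6*y^2/u^3 + 3/u^2) * hh y u := rfl
  rw [e0, e1, e4]
  linarith [hz]

lemma gauss_mul_hh {y u : ℝ} (hu : 0 < u) : gauss y u * gauss u 1 = hh y u := by
  unfold gauss
  exact gauss_mul_eq_hh hu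

lemma gauss_integral_eq (y : ℝ) :
    ∫ u in Ioi (0:ℝ), gauss y u * gauss u 1 = Q0 y :=
  setIntegral_congr_fun measurableSet_Ioi (fun u hu => gauss_mul_hh hu)

lemma gauss_scale_var {x u c : ℝ} (hu : 0 < u) (hc : 0 < c) :
    gauss x (u * c^2) = c⁻¹ * gauss (x * c⁻¹) u := by
  unfold gauss
  have h1 : Real.sqrt (2*π*(u*c^2)) = Real.sqrt (2*π*u) * c := by
    rw [show 2*π*(u*c^2) = (2*π*u) * c^2 by ring,
      Real.sqrt_mul (by positivity) (c^2), Real.sqrt_sq hc.le]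
  have h2 : -(x * c⁻¹)^2 / (2*u) = -x^2/(2*(u*c^2)) := by
    rw [mul_pow, div_eq_div_iff (by positivity) (by positivity)]
    field_simp
  rw [h1, mul_inv, ← h2]
  ring

lemma gauss_scale_pt {u c : ℝ} (hc : 0 < c) :
    gauss (c * u) (c^2) = c⁻¹ * gauss u 1 := by
  unfold gauss
  have h1 : Real.sqrt (2*π*c^2) = Real.sqrt (2*π*1) * c := by
    rw [show 2*π*c^2 = (2*π*1)*c^2 by ring,
      Real.sqrt_mul (by positivity) (c^2), Real.sqrt_sq hc.le]
  have h2 : -(c*u)^2/(2*c^2) = -u^2/(2*1) := by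
    field_simp
  rw [h1, mul_inv, h2]
  ring

lemma rpow_sq {t : ℝ} (ht : 0 < t) (a : ℝ) : (t ^ a)^2 = t ^ (2*a) := by
  rw [← Real.rpow_natCast (t ^ a) 2, ← Real.rpow_mul ht.le]
  norm_num [mul_comm]

lemma densLF_scale (H K x t : ℝ) (ht : 0 < t) :
    densLF H K x t = t ^ (-(K + H/2)) * (2 * Q0 (x * t ^ (-(K + H/2)))) := by
  set β := K + H/2 with hβ
  have hc : (0:ℝ) < t ^ β := Real.rpow_pos_of_pos ht β
  have hH' : (0:ℝ) < t ^ H := Real.rpow_pos_of_pos ht H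
  have hcomp := integral_comp_mul_left_Ioi
    (fun s => gauss x (s * t ^ (2*K)) * gauss s (t ^ (2*H))) 0 hH'
  rw [mul_zero] at hcomp
  have h3 : (∫ s in Ioi (0:ℝ), gauss x (s * t ^ (2*K)) * gauss s (t ^ (2*H)))
      = t^H * ∫ u in Ioi (0:ℝ),
          gauss x ((t^H * u) * t ^ (2*K)) * gauss (t^H * u) (t ^ (2*H)) := by
    rw [hcomp, smul_eq_mul, ← mul_assoc, mul_inv_cancel₀ hH'.ne', one_mul]
  have hpt : ∀ u ∈ Ioi (0:ℝ),
      gauss x ((t^H * u) * t ^ (2*K)) * gauss (t^H * u) (t ^ (2*H))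
      = ((t ^ β)⁻¹ * (t ^ H)⁻¹) * (gauss (x * (t ^ β)⁻¹) u * gauss u 1) := by
    intro u hu
    have hu' : (0:ℝ) < u := hu
    have e2K : (t^H * u) * t ^ (2*K) = u * (t ^ β)^2 := by
      have hm : t^H * t^(2*K) = (t^β)^2 := by
        rw [rpow_sq ht β, ← Real.rpow_add ht]
        congr 1
        rw [hβ]; ring
      calc (t^H * u) * t ^ (2*K) = u * (t^H * t^(2*K)) := by ring
        _ = u * (t^β)^2 := by rw [hm]
    have e2H : t ^ (2*H) = (t^H)^2 := (rpow_sq ht H).symm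
    rw [e2K, e2H, gauss_scale_var hu' hc, gauss_scale_pt hH']
    ring
  have h4 : (∫ u in Ioi (0:ℝ),
        gauss x ((t^H * u) * t ^ (2*K)) * gauss (t^H * u) (t ^ (2*H)))
      = ((t ^ β)⁻¹ * (t ^ H)⁻¹) * Q0 (x * (t ^ β)⁻¹) := by
    rw [setIntegral_congr_fun measurableSet_Ioi hpt, integral_const_mul,
      gauss_integral_eq]
  have hneg : t ^ (-β) = (t ^ β)⁻¹ := Real.rpow_neg ht.le β
  unfold densLF
  rw [h3, h4, hneg]
  field_simp


/-- For `H ∈ (0,1)`, `K ≥ 0`, `x ≠ 0` and `t > 0`, the density of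
`L_F(t) = t^K B¹(|B²_H(t)|)` satisfies
`t ∂p/∂t = −K ∂/∂x (x p) + (H/4) t^{4K+2H} ∂⁴p/∂x⁴`. -/
theorem densLF_fourth_order_pde (H K : ℝ) (hH : H ∈ Set.Ioo (0 : ℝ) 1) (hK : 0 ≤ K)
    (x t : ℝ) (hx : x ≠ 0) (ht : 0 < t) :
    t * deriv (fun τ => densLF H K x τ) t
      = -K * deriv (fun y => y * densLF H K y t) x
        + (H / 4) * t ^ (4 * K + 2 * H) * iteratedDeriv 4 (fun y => densLF H K y t) x := by
  have hc0 : (0:ℝ) < t ^ (-(K + H / 2)) := Real.rpow_pos_of_pos ht _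
  have hcne : t ^ (-(K + H / 2)) ≠ 0 := hc0.ne'
  have hy0 : x * t ^ (-(K + H / 2)) ≠ 0 := mul_ne_zero hx hcne
  have hzc : ∀ z : ℝ, z ≠ 0 → z * t ^ (-(K + H / 2)) ≠ 0 :=
    fun z hz => mul_ne_zero hz hcne
  have hfun : (fun y => densLF H K y t)
      = fun y => t ^ (-(K + H / 2)) * (2 * Q0 (y * t ^ (-(K + H / 2)))) :=
    funext fun y => densLF_scale H K y t ht
  have inner : ∀ z : ℝ, HasDerivAt (fun y : ℝ => y * t ^ (-(K + H / 2)))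
      (t ^ (-(K + H / 2))) z := fun z => hasDerivAt_mul_const _
  -- spatial derivatives
  have D1 : ∀ z : ℝ, z ≠ 0 → HasDerivAt (fun y => densLF H K y t)
      (t ^ (-(K + H / 2)) * (2 * (Q1 (z * t ^ (-(K + H / 2))) * t ^ (-(K + H / 2))))) z := by
    intro z hz
    rw [hfun]
    exact ((HasDerivAt.comp z (hasDerivAt_Q0 (hzc z hz)) (inner z)).const_mul
      2).const_mul _
  have D2 : ∀ z : ℝ, z ≠ 0 → HasDerivAt
      (fun w => t ^ (-(K + H / 2)) * (2 * (Q1 (w * t ^ (-(K + H / 2))) * t ^ (-(K + H / 2)))))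
      (t ^ (-(K + H / 2)) * (2 * (Q2 (z * t ^ (-(K + H / 2))) * t ^ (-(K + H / 2))
        * t ^ (-(K + H / 2))))) z := by
    intro z hz
    exact (((HasDerivAt.comp z (hasDerivAt_Q1 (hzc z hz)) (inner z)).mul_const
      _).const_mul 2).const_mul _
  have D3 : ∀ z : ℝ, z ≠ 0 → HasDerivAt
      (fun w => t ^ (-(K + H / 2)) * (2 * (Q2 (w * t ^ (-(K + H / 2))) * t ^ (-(K + H / 2))
        * t ^ (-(K + H / 2)))))
      (t ^ (-(K + H / 2)) * (2 * (Q3 (z * t ^ (-(K + H / 2))) * t ^ (-(K + H / 2))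
        * t ^ (-(K + H / 2)) * t ^ (-(K + H / 2))))) z := by
    intro z hz
    exact ((((HasDerivAt.comp z (hasDerivAt_Q2 (hzc z hz)) (inner z)).mul_const
      _).mul_const _).const_mul 2).const_mul _
  have D4 : ∀ z : ℝ, z ≠ 0 → HasDerivAt
      (fun w => t ^ (-(K + H / 2)) * (2 * (Q3 (w * t ^ (-(K + H / 2))) * t ^ (-(K + H / 2))
        * t ^ (-(K + H / 2)) * t ^ (-(K + H / 2)))))
      (t ^ (-(K + H / 2)) * (2 * (Q4 (z * t ^ (-(K + H / 2))) * t ^ (-(K + H / 2))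
        * t ^ (-(K + H / 2)) * t ^ (-(K + H / 2)) * t ^ (-(K + H / 2))))) z := by
    intro z hz
    exact (((((HasDerivAt.comp z (hasDerivAt_Q3 (hzc z hz)) (inner z)).mul_const
      _).mul_const _).mul_const _).const_mul 2).const_mul _
  have hU : IsOpen {z : ℝ | z ≠ 0} := isOpen_ne
  have hmem : {z : ℝ | z ≠ 0} ∈ 𝓝 x := hU.mem_nhds hx
  have e1 : ∀ z : ℝ, z ≠ 0 → deriv (fun y => densLF H K y t) z
      = t ^ (-(K + H / 2)) * (2 * (Q1 (z * t ^ (-(K + H / 2))) * t ^ (-(K + H / 2)))) :=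
    fun z hz => (D1 z hz).deriv
  have e2 : ∀ z : ℝ, z ≠ 0 → deriv (deriv (fun y => densLF H K y t)) z
      = t ^ (-(K + H / 2)) * (2 * (Q2 (z * t ^ (-(K + H / 2))) * t ^ (-(K + H / 2))
        * t ^ (-(K + H / 2)))) := by
    intro z hz
    have heq := eventuallyEq_of_mem (hU.mem_nhds hz) (fun w hw => e1 w hw)
    rw [heq.deriv_eq]
    exact (D2 z hz).deriv
  have e3 : ∀ z : ℝ, z ≠ 0 → deriv (deriv (deriv (fun y => densLF H K y t))) z
      = t ^ (-(K + H / 2)) * (2 * (Q3 (z * t ^ (-(K + H / 2))) * t ^ (-(K + H / 2))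
        * t ^ (-(K + H / 2)) * t ^ (-(K + H / 2)))) := by
    intro z hz
    have heq := eventuallyEq_of_mem (hU.mem_nhds hz) (fun w hw => e2 w hw)
    rw [heq.deriv_eq]
    exact (D3 z hz).deriv
  have hI4 : iteratedDeriv 4 (fun y => densLF H K y t) x
      = t ^ (-(K + H / 2)) * (2 * (Q4 (x * t ^ (-(K + H / 2))) * t ^ (-(K + H / 2))
        * t ^ (-(K + H / 2)) * t ^ (-(K + H / 2)) * t ^ (-(K + H / 2)))) := by
    rw [show (4:ℕ) = 3+1 from rfl, iteratedDeriv_succ,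
      show (3:ℕ) = 2+1 from rfl, iteratedDeriv_succ,
      show (2:ℕ) = 1+1 from rfl, iteratedDeriv_succ,
      iteratedDeriv_one]
    have heq := eventuallyEq_of_mem hmem (fun w hw => e3 w hw)
    rw [heq.deriv_eq]
    exact (D4 x hx).deriv
  -- derivative of y * p
  have hPx : deriv (fun y => y * densLF H K y t) x
      = densLF H K x t + x * (t ^ (-(K + H / 2))
        * (2 * (Q1 (x * t ^ (-(K + H / 2))) * t ^ (-(K + H / 2))))) := by
    have h := (hasDerivAt_id' (𝕜 := ℝ) (x := x)).mul (D1 x hx)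
    rw [show (fun y => y * densLF H K y t) = ((fun x => x) * fun y => densLF H K y t) from rfl, h.deriv]
    ring
  -- time derivative
  have hev : (fun τ => densLF H K x τ) =ᶠ[𝓝 t]
      (fun τ => τ ^ (-(K + H / 2)) * (2 * Q0 (x * τ ^ (-(K + H / 2))))) :=
    eventuallyEq_of_mem (isOpen_Ioi.mem_nhds ht) (fun τ hτ => densLF_scale H K x τ hτ)
  have hr : HasDerivAt (fun τ : ℝ => τ ^ (-(K + H / 2)))
      ((-(K + H / 2)) * t ^ (-(K + H / 2) - 1)) t :=
    Real.hasDerivAt_rpow_const (Or.inl ht.ne')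
  have hinner : HasDerivAt (fun τ : ℝ => x * τ ^ (-(K + H / 2)))
      (x * ((-(K + H / 2)) * t ^ (-(K + H / 2) - 1))) t := hr.const_mul x
  have hcompt : HasDerivAt (fun τ : ℝ => Q0 (x * τ ^ (-(K + H / 2))))
      (Q1 (x * t ^ (-(K + H / 2))) * (x * ((-(K + H / 2)) * t ^ (-(K + H / 2) - 1)))) t :=
    HasDerivAt.comp t (hasDerivAt_Q0 hy0) hinner
  have htot := hr.mul (hcompt.const_mul 2)
  have hDt : deriv (fun τ => densLF H K x τ) t
      = (-(K + H / 2)) * t ^ (-(K + H / 2) - 1) * (2 * Q0 (x * t ^ (-(K + H / 2))))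
        + t ^ (-(K + H / 2)) * (2 * (Q1 (x * t ^ (-(K + H / 2)))
          * (x * ((-(K + H / 2)) * t ^ (-(K + H / 2) - 1))))) := by
    rw [hev.deriv_eq]
    exact htot.deriv
  -- rpow algebra
  have hA : t * t ^ (-(K + H / 2) - 1) = t ^ (-(K + H / 2)) := by
    rw [show t * t ^ (-(K + H / 2) - 1) = t ^ (1:ℝ) * t ^ (-(K + H / 2) - 1) by
      rw [Real.rpow_one], ← Real.rpow_add ht]
    congr 1
    ring
  have hB : t ^ (4 * K + 2 * H) * (t ^ (-(K + H / 2))) ^ (5:ℕ) = t ^ (-(K + H / 2)) := by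
    have h5 : (t ^ (-(K + H / 2))) ^ (5:ℕ) = t ^ ((-(K + H / 2)) * 5) := by
      rw [← Real.rpow_natCast (t ^ (-(K + H / 2))) 5, ← Real.rpow_mul ht.le]
      norm_num
    rw [h5, ← Real.rpow_add ht]
    congr 1
    ring
  rw [hDt, hPx, hI4, densLF_scale H K x t ht, Q_ode hy0]
  linear_combination
    ((-2*(K + H/2)) * Q0 (x * t ^ (-(K + H / 2)))
      + (-2*(K + H/2)) * x * Q1 (x * t ^ (-(K + H / 2))) * t ^ (-(K + H / 2))) * hA
    + (H * Q0 (x * t ^ (-(K + H / 2)))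
      + H * x * Q1 (x * t ^ (-(K + H / 2))) * t ^ (-(K + H / 2))) * hB
end

section
/- Let H₁, H₂ ∈ (0,1) and define p(x,t) = 2 ∫₀^∞ g(x; s^{2H₁}) g(s; t^{2H₂}) ds. Then for all x ≠ 0 and t > 0, p satisfies the first-order partial differential equation t ∂p/∂t = −H₁H₂ ∂/∂x ( x p ). -/
open Real Set MeasureTheory

/-- Density of the iterated fractional Brownian motion `I_F(t) = B¹_{H₁}(|B²_{H₂}(t)|)`:
`p(x,t) = 2 ∫₀^∞ g(x; s^{2H₁}) g(s; t^{2H₂}) ds`. -/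
noncomputable def densIF (H₁ H₂ x t : ℝ) : ℝ :=
  2 * ∫ s in Set.Ioi (0 : ℝ), gauss x (s ^ (2 * H₁)) * gauss s (t ^ (2 * H₂))

lemma gauss_nonneg (x v : ℝ) : 0 ≤ gauss x v := by
  unfold gauss; positivity

/-- Scaling property of the Gaussian density. -/
lemma gauss_scale {k : ℝ} (hk : 0 < k) (x v : ℝ) :
    gauss x (k ^ 2 * v) = k⁻¹ * gauss (x * k⁻¹) v := by
  unfold gauss
  have h1 : Real.sqrt (2 * π * (k ^ 2 * v)) = k * Real.sqrt (2 * π * v) := by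
    rw [show 2 * π * (k ^ 2 * v) = k ^ 2 * (2 * π * v) by ring,
      Real.sqrt_mul (sq_nonneg k), Real.sqrt_sq hk.le]
  have h2 : -x ^ 2 / (2 * (k ^ 2 * v)) = -(x * k⁻¹) ^ 2 / (2 * v) := by
    rcases eq_or_ne v 0 with h | h
    · simp [h]
    · rw [div_eq_div_iff (by simp [hk.ne', h] : 2 * (k ^ 2 * v) ≠ 0)
        (by simp [h] : 2 * v ≠ 0)]
      field_simp
  rw [h1, h2, mul_inv]
  ring

lemma sq_le_imp_le {a b : ℝ} (ha : 0 ≤ a) (hb : 0 ≤ b) (h : a ^ 2 ≤ b ^ 2) : a ≤ b := by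
  nlinarith

lemma exp_half_sq (a v : ℝ) (hv : v ≠ 0) :
    Real.exp (-a ^ 2 / (2 * v)) ^ 2 = Real.exp (-(a ^ 2 / v)) := by
  rw [← Real.exp_nat_mul]
  congr 1
  push_cast
  field_simp

/-- Uniform bound on the Gaussian density. -/
lemma gauss_le {x : ℝ} (hx : x ≠ 0) (v : ℝ) : gauss x v ≤ 1 / |x| := by
  rcases le_or_gt v 0 with hv | hv
  · have h0 : Real.sqrt (2 * π * v) = 0 := Real.sqrt_eq_zero'.mpr (by nlinarith [Real.pi_pos])
    unfold gauss
    rw [h0, inv_zero, zero_mul]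
    positivity
  · have hx2 : (0:ℝ) < x ^ 2 := by positivity
    have hA2 : Real.sqrt (2 * π * v) ^ 2 = 2 * π * v := Real.sq_sqrt (by positivity)
    have hexp : x ^ 2 / v ≤ Real.exp (x ^ 2 / v) := by
      have := Real.add_one_le_exp (x ^ 2 / v); linarith
    have hkey : x ^ 2 ≤ 2 * π * v * Real.exp (x ^ 2 / v) := by
      have h1 : x ^ 2 / v * v = x ^ 2 := div_mul_cancel₀ _ hv.ne'
      have h2 : x ^ 2 / v * v ≤ Real.exp (x ^ 2 / v) * v :=
        mul_le_mul_of_nonneg_right hexp hv.le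
      nlinarith [Real.pi_gt_three, Real.exp_pos (x ^ 2 / v), mul_pos hv (Real.exp_pos (x ^ 2 / v))]
    have hsq : gauss x v ^ 2 = (2 * π * v)⁻¹ * Real.exp (-(x ^ 2 / v)) := by
      unfold gauss
      rw [mul_pow, inv_pow, hA2, exp_half_sq x v hv.ne']
    have hsq_le : gauss x v ^ 2 ≤ (1 / |x|) ^ 2 := by
      rw [hsq, div_pow, one_pow, sq_abs, Real.exp_neg, ← mul_inv, one_div]
      exact inv_anti₀ hx2 hkey
    exact sq_le_imp_le (gauss_nonneg x v) (by positivity) hsq_le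

/-- Uniform bound on the `x`-derivative of the Gaussian density. -/
lemma gauss_deriv_le {x : ℝ} (hx : x ≠ 0) {v : ℝ} (hv : 0 < v) :
    |x / v * gauss x v| ≤ 3 / x ^ 2 := by
  have hx2 : (0:ℝ) < x ^ 2 := by positivity
  have hA2 : Real.sqrt (2 * π * v) ^ 2 = 2 * π * v := Real.sq_sqrt (by positivity)
  have hcube : (x ^ 2 / v) ^ 3 ≤ 27 * Real.exp (x ^ 2 / v) := by
    set s := x ^ 2 / v with hsdef
    have h1 : s / 3 + 1 ≤ Real.exp (s / 3) := Real.add_one_le_exp _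
    have h2 : (s / 3) ^ 3 ≤ Real.exp (s / 3) ^ 3 := by
      apply pow_le_pow_left₀ (by positivity)
      linarith
    have h3 : Real.exp (s / 3) ^ 3 = Real.exp s := by
      rw [← Real.exp_nat_mul]
      congr 1
      push_cast
      ring
    nlinarith [h2, h3]
  have hkey : x ^ 6 ≤ 27 * v ^ 3 * Real.exp (x ^ 2 / v) := by
    have h1 : (x ^ 2 / v) ^ 3 * v ^ 3 = x ^ 6 := by
      rw [div_pow, div_mul_cancel₀ _ (by positivity : v ^ 3 ≠ 0)]
      ring
    have h2 : (x ^ 2 / v) ^ 3 * v ^ 3 ≤ 27 * Real.exp (x ^ 2 / v) * v ^ 3 :=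
      mul_le_mul_of_nonneg_right hcube (by positivity)
    nlinarith
  have hsq : (x / v * gauss x v) ^ 2
      = x ^ 2 / v ^ 2 * ((2 * π * v)⁻¹ * Real.exp (-(x ^ 2 / v))) := by
    unfold gauss
    rw [mul_pow, mul_pow, inv_pow, hA2, exp_half_sq x v hv.ne', div_pow]
  have hsq_le : (x / v * gauss x v) ^ 2 ≤ (3 / x ^ 2) ^ 2 := by
    rw [hsq, Real.exp_neg, div_pow]
    have hrw : x ^ 2 / v ^ 2 * ((2 * π * v)⁻¹ * (Real.exp (x ^ 2 / v))⁻¹)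
        = x ^ 6 / (x ^ 4 * (2 * π * v ^ 3 * Real.exp (x ^ 2 / v))) := by
      rw [eq_div_iff (by positivity)]
      field_simp
    rw [hrw, div_le_div_iff₀ (by positivity) (by positivity)]
    have hp1 : x ^ 6 * x ^ 4 ≤ 27 * v ^ 3 * Real.exp (x ^ 2 / v) * x ^ 4 :=
      mul_le_mul_of_nonneg_right hkey (by positivity)
    have hp2 : 0 ≤ (π - 3) * (x ^ 4 * (v ^ 3 * Real.exp (x ^ 2 / v))) :=
      mul_nonneg (by linarith [Real.pi_gt_three]) (by positivity)
    have hp3 : (0:ℝ) ≤ x ^ 4 * (v ^ 3 * Real.exp (x ^ 2 / v)) := by positivity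
    nlinarith [hp1, hp2, hp3]
  have habs : |x / v * gauss x v| ^ 2 = (x / v * gauss x v) ^ 2 := sq_abs _
  exact sq_le_imp_le (abs_nonneg _) (by positivity) (by rw [habs]; exact hsq_le)

lemma integrable_gauss_one : Integrable (fun u : ℝ => gauss u 1) := by
  have h : (fun u : ℝ => gauss u 1)
      = fun u : ℝ => (Real.sqrt (2 * π))⁻¹ * Real.exp (-(1/2 : ℝ) * u ^ 2) := by
    funext u
    unfold gauss
    rw [mul_one]
    congr 1
    ring
  rw [h]
  exact (integrable_exp_neg_mul_sq (by norm_num : (0:ℝ) < 1/2)).const_mul _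

lemma measurable_gauss_comp (y : ℝ) {c : ℝ} (hc : 0 ≤ c) :
    Measurable fun u : ℝ => gauss y (u ^ c) := by
  have hv : Measurable fun u : ℝ => u ^ c := (Real.continuous_rpow_const hc).measurable
  unfold gauss
  exact ((continuous_const.mul continuous_id).sqrt.measurable.comp hv).inv.mul
    ((measurable_const.div ((measurable_const.mul measurable_id).comp hv)).exp)


lemma measurable_gauss_one : Measurable fun u : ℝ => gauss u 1 := by
  unfold gauss
  exact measurable_const.mul (((measurable_id.pow_const 2).neg.div_const _).exp)

lemma measurable_deriv_aux {c : ℝ} (hc : 0 ≤ c) (y : ℝ) :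
    Measurable fun u : ℝ => -(y / u ^ c) * gauss y (u ^ c) * gauss u 1 := by
  have hv : Measurable fun u : ℝ => u ^ c := (Real.continuous_rpow_const hc).measurable
  exact ((measurable_const.div hv).neg.mul (measurable_gauss_comp y hc)).mul
    measurable_gauss_one

lemma hasDerivAt_densIF_one (H₁ H₂ : ℝ) (hH₁ : 0 < H₁) (z : ℝ) (hz : z ≠ 0) :
    ∃ d, HasDerivAt (fun y => densIF H₁ H₂ y 1) d z := by
  have hc : (0:ℝ) ≤ 2 * H₁ := by linarith
  have hz2 : (0:ℝ) < z ^ 2 := by positivity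
  set μ := MeasureTheory.volume.restrict (Ioi (0:ℝ)) with hμ
  set Fn : ℝ → ℝ → ℝ := fun y u => gauss y (u ^ (2 * H₁)) * gauss u 1 with hFn
  set Fn' : ℝ → ℝ → ℝ :=
    fun y u => -(y / u ^ (2 * H₁)) * gauss y (u ^ (2 * H₁)) * gauss u 1 with hFn'
  have hgint : Integrable (fun u : ℝ => gauss u 1) μ := integrable_gauss_one.restrict
  have key := hasDerivAt_integral_of_dominated_loc_of_deriv_le
    (F := Fn) (F' := Fn') (x₀ := z) (s := Metric.ball z (|z| / 2))
    (bound := fun u => 12 / z ^ 2 * gauss u 1)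
    (Metric.ball_mem_nhds z (by positivity))
    (Filter.Eventually.of_forall fun y =>
      ((measurable_gauss_comp y hc).mul measurable_gauss_one).aestronglyMeasurable)
    ?hFint
    ((measurable_deriv_aux hc z).aestronglyMeasurable)
    ?hbound
    (Integrable.const_mul hgint _)
    ?hdiff
  · obtain ⟨-, hder⟩ := key
    refine ⟨2 * ∫ u, Fn' z u ∂μ, ?_⟩
    have h2 : (fun y => densIF H₁ H₂ y 1) = fun y => 2 * ∫ u, Fn y u ∂μ := by
      funext y
      unfold densIF
      simp only [Real.one_rpow, hFn, hμ]
    rw [h2]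
    exact hder.const_mul 2
  · -- integrability at the point z
    apply Integrable.mono' (Integrable.const_mul hgint (1 / |z|))
      (((measurable_gauss_comp z hc).mul measurable_gauss_one).aestronglyMeasurable)
    refine Filter.Eventually.of_forall fun u => ?_
    have h1 : ‖Fn z u‖ = gauss z (u ^ (2 * H₁)) * gauss u 1 := by
      rw [Real.norm_eq_abs, abs_of_nonneg (mul_nonneg (gauss_nonneg _ _) (gauss_nonneg _ _))]
    show ‖Fn z u‖ ≤ 1 / |z| * gauss u 1
    rw [h1]
    exact mul_le_mul_of_nonneg_right (gauss_le hz _) (gauss_nonneg _ _)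
  · -- uniform bound on the derivative in a ball
    rw [hμ, MeasureTheory.ae_restrict_iff' measurableSet_Ioi]
    refine Filter.Eventually.of_forall fun u hu => ?_
    intro y hy
    have hv : (0:ℝ) < u ^ (2 * H₁) := Real.rpow_pos_of_pos hu _
    have hyz : |z| / 2 ≤ |y| := by
      have := abs_sub_abs_le_abs_sub z y
      rw [Metric.mem_ball, Real.dist_eq] at hy
      rw [abs_sub_comm] at this
      linarith
    have hy0 : y ≠ 0 := by
      intro h; rw [h, abs_zero] at hyz
      have : (0:ℝ) < |z| := abs_pos.mpr hz
      linarith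
    have hb1 : |y / u ^ (2 * H₁) * gauss y (u ^ (2 * H₁))| ≤ 3 / y ^ 2 :=
      gauss_deriv_le hy0 hv
    have hb2 : 3 / y ^ 2 ≤ 12 / z ^ 2 := by
      rw [div_le_div_iff₀ (by positivity) hz2]
      have h4 : z ^ 2 ≤ 4 * y ^ 2 := by
        have h1 : |z| ≤ 2 * |y| := by linarith
        have h2 : |z| ^ 2 ≤ (2 * |y|) ^ 2 := by
          apply pow_le_pow_left₀ (abs_nonneg _) h1
        rw [sq_abs] at h2
        nlinarith [sq_abs y]
      nlinarith
    have : ‖Fn' y u‖ = |y / u ^ (2 * H₁) * gauss y (u ^ (2 * H₁))| * gauss u 1 := by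
      rw [Real.norm_eq_abs, hFn']
      simp only []
      rw [abs_mul, abs_of_nonneg (gauss_nonneg u 1), neg_mul, abs_neg]
    rw [this]
    calc |y / u ^ (2 * H₁) * gauss y (u ^ (2 * H₁))| * gauss u 1
        ≤ (12 / z ^ 2) * gauss u 1 :=
          mul_le_mul_of_nonneg_right (hb1.trans hb2) (gauss_nonneg _ _)
      _ = 12 / z ^ 2 * gauss u 1 := by ring
  · -- differentiability pointwise
    rw [hμ, MeasureTheory.ae_restrict_iff' measurableSet_Ioi]
    refine Filter.Eventually.of_forall fun u hu => ?_
    intro y hy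
    have hv : (0:ℝ) < u ^ (2 * H₁) := Real.rpow_pos_of_pos hu _
    set v := u ^ (2 * H₁) with hvdef
    have h0 : HasDerivAt (fun w : ℝ => -w ^ 2 / (2 * v)) (-(y / v)) y := by
      have h1 : HasDerivAt (fun y => -(2 * v)⁻¹ * y ^ 2) (-(2 * v)⁻¹ * (↑(2:ℕ) * y ^ (2 - 1))) y :=
        (hasDerivAt_pow 2 y).const_mul (-(2 * v)⁻¹)
      convert h1 using 1
      · funext w
        field_simp
      · field_simp
        ring
    have h2 := ((h0.exp.const_mul (Real.sqrt (2 * π * v))⁻¹).mul_const (gauss u 1))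
    refine HasDerivAt.congr_deriv h2 ?_
    have hgy : gauss y v = (Real.sqrt (2 * π * v))⁻¹ * Real.exp (-y ^ 2 / (2 * v)) := rfl
    rw [hFn']
    simp only []
    rw [← hvdef, hgy]
    ring

/-- Self-similarity of the density. -/
lemma densIF_scale (H₁ H₂ x t : ℝ) (ht : 0 < t) :
    densIF H₁ H₂ x t
      = (t ^ (H₁ * H₂))⁻¹ * densIF H₁ H₂ (x * (t ^ (H₁ * H₂))⁻¹) 1 := by
  have hc : (0:ℝ) < t ^ H₂ := Real.rpow_pos_of_pos ht _
  have hk : (0:ℝ) < t ^ (H₁ * H₂) := Real.rpow_pos_of_pos ht _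
  have hsub := MeasureTheory.integral_comp_mul_left_Ioi
      (fun s => gauss x (s ^ (2 * H₁)) * gauss s (t ^ (2 * H₂))) 0 hc
  rw [mul_zero] at hsub
  have hpt : EqOn
      (fun u => gauss x ((t ^ H₂ * u) ^ (2 * H₁)) * gauss (t ^ H₂ * u) (t ^ (2 * H₂)))
      (fun u => ((t ^ (H₁ * H₂))⁻¹ * (t ^ H₂)⁻¹) *
        (gauss (x * (t ^ (H₁ * H₂))⁻¹) (u ^ (2 * H₁)) * gauss u 1)) (Ioi 0) := by
    intro u hu
    have hu0 : (0:ℝ) < u := hu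
    simp only []
    have e1 : (t ^ H₂ * u) ^ (2 * H₁) = (t ^ (H₁ * H₂)) ^ 2 * u ^ (2 * H₁) := by
      rw [Real.mul_rpow hc.le hu0.le]
      congr 1
      rw [← Real.rpow_mul ht.le, sq, ← Real.rpow_add ht]
      ring_nf
    have e2 : t ^ (2 * H₂) = (t ^ H₂) ^ 2 * 1 := by
      rw [mul_one, sq, ← Real.rpow_add ht]
      ring_nf
    rw [e1, e2, gauss_scale hk, gauss_scale hc,
      show t ^ H₂ * u * (t ^ H₂)⁻¹ = u by field_simp]
    ring
  have hI : (∫ s in Ioi (0:ℝ), gauss x (s ^ (2 * H₁)) * gauss s (t ^ (2 * H₂)))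
      = t ^ H₂ * ∫ u in Ioi (0:ℝ),
          gauss x ((t ^ H₂ * u) ^ (2 * H₁)) * gauss (t ^ H₂ * u) (t ^ (2 * H₂)) := by
    rw [hsub, smul_eq_mul, ← mul_assoc, mul_inv_cancel₀ hc.ne', one_mul]
  unfold densIF
  rw [hI, MeasureTheory.setIntegral_congr_fun measurableSet_Ioi hpt,
    MeasureTheory.integral_const_mul]
  simp only [Real.one_rpow]
  field_simp

/-- For `H₁, H₂ ∈ (0,1)`, `x ≠ 0` and `t > 0`, the density of the iterated
fractional Brownian motion satisfies `t ∂p/∂t = −H₁H₂ ∂/∂x (x p)`. -/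
theorem densIF_first_order_pde (H₁ H₂ : ℝ) (hH₁ : H₁ ∈ Set.Ioo (0 : ℝ) 1)
    (hH₂ : H₂ ∈ Set.Ioo (0 : ℝ) 1) (x t : ℝ) (hx : x ≠ 0) (ht : 0 < t) :
    t * deriv (fun τ => densIF H₁ H₂ x τ) t
      = -(H₁ * H₂) * deriv (fun y => y * densIF H₁ H₂ y t) x := by
  obtain ⟨hH₁0, -⟩ := hH₁
  have hk : (0:ℝ) < t ^ (H₁ * H₂) := Real.rpow_pos_of_pos ht _
  have hz : x * (t ^ (H₁ * H₂))⁻¹ ≠ 0 := mul_ne_zero hx (inv_ne_zero hk.ne')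
  obtain ⟨d, hd⟩ := hasDerivAt_densIF_one H₁ H₂ hH₁0 _ hz
  -- derivative in t
  have hφ : HasDerivAt (fun τ : ℝ => τ ^ (H₁ * H₂)) (H₁ * H₂ * t ^ (H₁ * H₂ - 1)) t :=
    Real.hasDerivAt_rpow_const (Or.inl ht.ne')
  have hφi : HasDerivAt (fun τ : ℝ => (τ ^ (H₁ * H₂))⁻¹)
      (-(H₁ * H₂ * t ^ (H₁ * H₂ - 1)) / (t ^ (H₁ * H₂)) ^ 2) t := hφ.inv hk.ne'
  have hinner : HasDerivAt (fun τ : ℝ => x * (τ ^ (H₁ * H₂))⁻¹)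
      (x * (-(H₁ * H₂ * t ^ (H₁ * H₂ - 1)) / (t ^ (H₁ * H₂)) ^ 2)) t := hφi.const_mul x
  have hcomp : HasDerivAt
      (fun τ : ℝ => densIF H₁ H₂ (x * (τ ^ (H₁ * H₂))⁻¹) 1)
      (d * (x * (-(H₁ * H₂ * t ^ (H₁ * H₂ - 1)) / (t ^ (H₁ * H₂)) ^ 2))) t :=
    HasDerivAt.comp (h₂ := fun y => densIF H₁ H₂ y 1) t hd hinner
  have hG : HasDerivAt
      (fun τ : ℝ => (τ ^ (H₁ * H₂))⁻¹ * densIF H₁ H₂ (x * (τ ^ (H₁ * H₂))⁻¹) 1)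
      (-(H₁ * H₂ * t ^ (H₁ * H₂ - 1)) / (t ^ (H₁ * H₂)) ^ 2
          * densIF H₁ H₂ (x * (t ^ (H₁ * H₂))⁻¹) 1
        + (t ^ (H₁ * H₂))⁻¹
          * (d * (x * (-(H₁ * H₂ * t ^ (H₁ * H₂ - 1)) / (t ^ (H₁ * H₂)) ^ 2)))) t :=
    hφi.mul hcomp
  have hev : (fun τ => densIF H₁ H₂ x τ) =ᶠ[nhds t]
      (fun τ : ℝ => (τ ^ (H₁ * H₂))⁻¹ * densIF H₁ H₂ (x * (τ ^ (H₁ * H₂))⁻¹) 1) := by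
    filter_upwards [Ioi_mem_nhds ht] with τ hτ using densIF_scale H₁ H₂ x τ hτ
  have hL : HasDerivAt (fun τ => densIF H₁ H₂ x τ)
      (-(H₁ * H₂ * t ^ (H₁ * H₂ - 1)) / (t ^ (H₁ * H₂)) ^ 2
          * densIF H₁ H₂ (x * (t ^ (H₁ * H₂))⁻¹) 1
        + (t ^ (H₁ * H₂))⁻¹
          * (d * (x * (-(H₁ * H₂ * t ^ (H₁ * H₂ - 1)) / (t ^ (H₁ * H₂)) ^ 2)))) t :=
    hG.congr_of_eventuallyEq hev
  -- derivative in x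
  have h1 : HasDerivAt (fun y : ℝ => y * (t ^ (H₁ * H₂))⁻¹) (t ^ (H₁ * H₂))⁻¹ x :=
    hasDerivAt_mul_const _
  have h2 : HasDerivAt (fun y : ℝ => densIF H₁ H₂ (y * (t ^ (H₁ * H₂))⁻¹) 1)
      (d * (t ^ (H₁ * H₂))⁻¹) x := HasDerivAt.comp (h₂ := fun y => densIF H₁ H₂ y 1) x hd h1
  have h3 := h2.const_mul ((t ^ (H₁ * H₂))⁻¹)
  have h4 : HasDerivAt
      (fun y : ℝ => y * ((t ^ (H₁ * H₂))⁻¹ * densIF H₁ H₂ (y * (t ^ (H₁ * H₂))⁻¹) 1))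
      (1 * ((t ^ (H₁ * H₂))⁻¹ * densIF H₁ H₂ (x * (t ^ (H₁ * H₂))⁻¹) 1)
        + x * ((t ^ (H₁ * H₂))⁻¹ * (d * (t ^ (H₁ * H₂))⁻¹))) x :=
    (hasDerivAt_id x).mul h3
  have hscale_x : (fun y => y * densIF H₁ H₂ y t)
      = fun y : ℝ => y * ((t ^ (H₁ * H₂))⁻¹ * densIF H₁ H₂ (y * (t ^ (H₁ * H₂))⁻¹) 1) := by
    funext y
    rw [densIF_scale H₁ H₂ y t ht]
  rw [hL.deriv, show deriv (fun y => y * densIF H₁ H₂ y t) x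
      = 1 * ((t ^ (H₁ * H₂))⁻¹ * densIF H₁ H₂ (x * (t ^ (H₁ * H₂))⁻¹) 1)
        + x * ((t ^ (H₁ * H₂))⁻¹ * (d * (t ^ (H₁ * H₂))⁻¹))
    from by rw [hscale_x]; exact h4.deriv]
  have htt : t ^ (H₁ * H₂ - 1) = t ^ (H₁ * H₂) / t := by
    rw [Real.rpow_sub ht, Real.rpow_one]
  rw [htt]
  field_simp
  ring
end

section
/- Let H₁, H₂ ∈ (0,1), t > 0, and k a positive integer. Then ∫_ℝ x^{2k} · ( 2 ∫₀^∞ g(x; s^{2H₁}) g(s; t^{2H₂}) ds ) dx = 2^{2 − k(1+H₁)} t^{2kH₁H₂} · (Γ(2k)/Γ(k)) · (Γ(2kH₁)/Γ(kH₁)). -/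
open Real Set MeasureTheory

lemma gauss_eq (x v : ℝ) :
    gauss x v = (Real.sqrt (2 * Real.pi * v))⁻¹ * Real.exp (-(2 * v)⁻¹ * x ^ 2) := by
  unfold gauss
  congr 2
  rw [div_eq_mul_inv]; ring

/-- Mellin-type Gaussian integral on `(0,∞)`. -/
lemma integral_rpow_mul_exp_neg_mul_sq_Ioi {b : ℝ} (hb : 0 < b) {q : ℝ} (hq : -1 < q) :
    ∫ x in Ioi (0:ℝ), x ^ q * Real.exp (-b * x ^ 2)
      = b ^ (-(q+1)/2) * (1/2) * Real.Gamma ((q+1)/2) := by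
  rw [← integral_rpow_mul_exp_neg_mul_rpow two_pos hq hb]
  refine setIntegral_congr_fun measurableSet_Ioi fun x _ => ?_
  rw [Real.rpow_two]

/-- Even moments of the centered Gaussian. -/
lemma integral_pow_mul_gauss {v : ℝ} (hv : 0 < v) (n : ℕ) :
    ∫ x : ℝ, x ^ (2*n) * gauss x v
      = (2*v) ^ (n : ℝ) * Real.Gamma (n + 1/2) / Real.sqrt π := by
  have hb : 0 < (2*v)⁻¹ := by positivity
  have h2v : (0:ℝ) < 2*v := by positivity
  have step1 : ∫ x : ℝ, x ^ (2*n) * gauss x v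
      = (Real.sqrt (2*π*v))⁻¹ *
        ∫ x : ℝ, |x| ^ ((2*n : ℕ) : ℝ) * Real.exp (-(2*v)⁻¹ * |x| ^ 2) := by
    rw [← integral_const_mul]
    congr 1; funext x
    rw [gauss_eq, Real.rpow_natCast, pow_mul |x|, sq_abs, ← pow_mul]
    ring
  have key : ∫ x : ℝ, |x| ^ ((2*n : ℕ) : ℝ) * Real.exp (-(2*v)⁻¹ * |x| ^ 2)
      = 2 * ∫ x in Ioi (0:ℝ), x ^ ((2*n : ℕ) : ℝ) * Real.exp (-(2*v)⁻¹ * x ^ 2) :=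
    integral_comp_abs (f := fun y => y ^ ((2*n : ℕ) : ℝ) * Real.exp (-(2*v)⁻¹ * y ^ 2))
  rw [step1, key, integral_rpow_mul_exp_neg_mul_sq_Ioi hb
    (by exact lt_of_lt_of_le neg_one_lt_zero (by positivity))]
  have e1 : Real.sqrt (2*π*v) = Real.sqrt π * (2*v) ^ (1/2 : ℝ) := by
    rw [show 2*π*v = π * (2*v) by ring, Real.sqrt_mul pi_pos.le, Real.sqrt_eq_rpow (2*v)]
  have e2 : ((2*v)⁻¹ : ℝ) ^ (-(((2*n : ℕ):ℝ)+1)/2) = (2*v) ^ ((((2*n : ℕ):ℝ)+1)/2) := by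
    rw [← Real.rpow_neg_one (2*v), ← Real.rpow_mul h2v.le]
    congr 1; ring
  rw [e1, e2]
  have e3 : ((2*v):ℝ) ^ ((((2*n : ℕ):ℝ)+1)/2) = (2*v) ^ ((n:ℝ)) * (2*v) ^ (1/2 : ℝ) := by
    rw [← Real.rpow_add h2v]
    congr 1; push_cast; ring
  have e4 : ((((2*n : ℕ):ℝ))+1)/2 = (n:ℝ) + 1/2 := by push_cast; ring
  rw [e3, e4]
  have hsp : Real.sqrt π ≠ 0 := by positivity
  have hv2 : ((2*v):ℝ) ^ (1/2:ℝ) ≠ 0 := by positivity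
  field_simp

/-- Moments of the centered Gaussian on the half line, real exponent. -/
lemma integral_rpow_mul_gauss {τ : ℝ} (hτ : 0 < τ) {q : ℝ} (hq : -1 < q) :
    ∫ s in Ioi (0:ℝ), s ^ q * gauss s τ
      = (2*τ) ^ (q/2) * Real.Gamma ((q+1)/2) / (2 * Real.sqrt π) := by
  have hb : 0 < (2*τ)⁻¹ := by positivity
  have h2τ : (0:ℝ) < 2*τ := by positivity
  have step1 : ∫ s in Ioi (0:ℝ), s ^ q * gauss s τ
      = (Real.sqrt (2*π*τ))⁻¹ * ∫ s in Ioi (0:ℝ), s ^ q * Real.exp (-(2*τ)⁻¹ * s ^ 2) := by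
    rw [← integral_const_mul]
    refine setIntegral_congr_fun measurableSet_Ioi fun s _ => ?_
    rw [gauss_eq]; ring
  rw [step1, integral_rpow_mul_exp_neg_mul_sq_Ioi hb hq]
  have e1 : Real.sqrt (2*π*τ) = Real.sqrt π * (2*τ) ^ (1/2 : ℝ) := by
    rw [show 2*π*τ = π * (2*τ) by ring, Real.sqrt_mul pi_pos.le, Real.sqrt_eq_rpow (2*τ)]
  have e2 : ((2*τ)⁻¹ : ℝ) ^ (-(q+1)/2) = (2*τ) ^ ((q+1)/2) := by
    rw [← Real.rpow_neg_one (2*τ), ← Real.rpow_mul h2τ.le]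
    congr 1; ring
  have e3 : ((2*τ):ℝ) ^ ((q+1)/2) = (2*τ) ^ (q/2) * (2*τ) ^ (1/2 : ℝ) := by
    rw [← Real.rpow_add h2τ]; congr 1; ring
  rw [e1, e2, e3]
  have hsp : Real.sqrt π ≠ 0 := by positivity
  have hv2 : ((2*τ):ℝ) ^ (1/2:ℝ) ≠ 0 := by positivity
  field_simp

lemma integrable_pow_mul_gauss {v : ℝ} (hv : 0 < v) (n : ℕ) :
    Integrable fun x : ℝ => x ^ n * gauss x v := by
  have hb : 0 < (2*v)⁻¹ := by positivity
  have : (fun x : ℝ => x ^ n * gauss x v)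
      = fun x : ℝ => (Real.sqrt (2*π*v))⁻¹ * (x ^ ((n:ℕ):ℝ) * Real.exp (-(2*v)⁻¹ * x ^ 2)) := by
    funext x; rw [gauss_eq, Real.rpow_natCast]; ring
  rw [this]
  exact (integrable_rpow_mul_exp_neg_mul_sq hb
    (lt_of_lt_of_le neg_one_lt_zero (by positivity))).const_mul _

lemma integrableOn_rpow_mul_gauss {τ : ℝ} (hτ : 0 < τ) {q : ℝ} (hq : -1 < q) :
    IntegrableOn (fun s : ℝ => s ^ q * gauss s τ) (Ioi 0) := by
  have hb : 0 < (2*τ)⁻¹ := by positivity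
  have : (fun s : ℝ => s ^ q * gauss s τ)
      = fun s : ℝ => (Real.sqrt (2*π*τ))⁻¹ * (s ^ q * Real.exp (-(2*τ)⁻¹ * s ^ 2)) := by
    funext s; rw [gauss_eq]; ring
  rw [this]
  exact (integrableOn_rpow_mul_exp_neg_mul_sq hb hq).const_mul _

lemma measurable_gauss_pair (a : ℝ) : Measurable fun p : ℝ × ℝ => gauss p.1 (p.2 ^ a) := by
  unfold gauss
  fun_prop

/-- For `H₁, H₂ ∈ (0,1)`, `t > 0` and a positive integer `k`, the `2k`-th moment of the
iterated fractional Brownian motion `B¹_{H₁}(|B²_{H₂}(t)|)` equals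
`2^{2 − k(1+H₁)} t^{2kH₁H₂} (Γ(2k)/Γ(k)) (Γ(2kH₁)/Γ(kH₁))`. -/
theorem iterated_fbm_even_moments (H₁ H₂ : ℝ) (hH₁ : H₁ ∈ Set.Ioo (0 : ℝ) 1)
    (hH₂ : H₂ ∈ Set.Ioo (0 : ℝ) 1) (t : ℝ) (ht : 0 < t) (k : ℕ) (hk : 0 < k) :
    ∫ x : ℝ, x ^ (2 * k) *
        (2 * ∫ s in Set.Ioi (0 : ℝ), gauss x (s ^ (2 * H₁)) * gauss s (t ^ (2 * H₂)))
      = (2 : ℝ) ^ ((2 : ℝ) - (k : ℝ) * (1 + H₁)) * t ^ (2 * (k : ℝ) * H₁ * H₂) *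
          (Real.Gamma (2 * k) / Real.Gamma k) *
          (Real.Gamma (2 * k * H₁) / Real.Gamma (k * H₁)) := by
  obtain ⟨hH₁0, hH₁1⟩ := hH₁
  obtain ⟨hH₂0, hH₂1⟩ := hH₂
  set τ : ℝ := t ^ (2 * H₂) with hτdef
  have hτ : 0 < τ := Real.rpow_pos_of_pos ht _
  set F : ℝ × ℝ → ℝ := fun p => p.1 ^ (2 * k) * (gauss p.1 (p.2 ^ (2 * H₁)) * gauss p.2 τ)
    with hF
  set A : ℝ := Real.Gamma ((k : ℝ) + 1/2) with hA
  set B : ℝ := Real.Gamma ((k : ℝ) * H₁ + 1/2) with hB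
  set c : ℝ := (2 : ℝ) ^ ((k : ℝ)) * A / Real.sqrt π with hc
  have hK : (0:ℝ) < (k:ℝ) := by exact_mod_cast hk
  -- the inner (x-)integral, for s > 0
  have inner : ∀ s : ℝ, s ∈ Ioi (0:ℝ) →
      (∫ x : ℝ, F (x, s)) = c * (s ^ (2 * H₁ * (k:ℝ)) * gauss s τ) := by
    intro s hs
    have hs' : (0:ℝ) < s := hs
    have hv : 0 < s ^ (2 * H₁) := Real.rpow_pos_of_pos hs' _
    have e : (fun x : ℝ => F (x, s))
        = fun x : ℝ => gauss s τ * (x ^ (2 * k) * gauss x (s ^ (2 * H₁))) := by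
      funext x; simp only [hF]; ring
    rw [e, integral_const_mul, integral_pow_mul_gauss hv k,
      Real.mul_rpow (by norm_num) (Real.rpow_nonneg hs'.le _), ← Real.rpow_mul hs'.le]
    simp only [hc]
    ring
  -- nonnegativity of F
  have hFnn : ∀ p : ℝ × ℝ, 0 ≤ F p := by
    intro p
    simp only [hF]
    have : (0:ℝ) ≤ p.1 ^ (2 * k) := by
      rw [pow_mul]; exact pow_nonneg (sq_nonneg _) _
    exact mul_nonneg this (mul_nonneg (gauss_nonneg _ _) (gauss_nonneg _ _))
  -- measurability
  have hFm : Measurable F := by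
    have h1 : Measurable fun y : ℝ => gauss y τ := by unfold gauss; fun_prop
    exact (measurable_fst.pow_const _).mul
      ((measurable_gauss_pair (2 * H₁)).mul (h1.comp measurable_snd))
  -- integrability on the product
  have hq' : (-1:ℝ) < 2 * H₁ * (k:ℝ) := by nlinarith
  have hInt : Integrable F ((volume : Measure ℝ).prod ((volume : Measure ℝ).restrict (Ioi 0))) := by
    rw [integrable_prod_iff' hFm.aestronglyMeasurable]
    constructor
    · filter_upwards [ae_restrict_mem measurableSet_Ioi] with s hs
      have hs' : (0:ℝ) < s := hs
      have hv : 0 < s ^ (2 * H₁) := Real.rpow_pos_of_pos hs' _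
      have e : (fun x : ℝ => F (x, s))
          = fun x : ℝ => gauss s τ * (x ^ (2 * k) * gauss x (s ^ (2 * H₁))) := by
        funext x; simp only [hF]; ring
      rw [e]
      exact (integrable_pow_mul_gauss hv (2 * k)).const_mul _
    · have hG : IntegrableOn
          (fun s : ℝ => c * (s ^ (2 * H₁ * (k:ℝ)) * gauss s τ)) (Ioi 0) :=
        (integrableOn_rpow_mul_gauss hτ hq').const_mul c
      refine hG.congr ?_
      filter_upwards [ae_restrict_mem measurableSet_Ioi] with s hs
      have : ∀ x : ℝ, ‖F (x, s)‖ = F (x, s) := fun x => Real.norm_of_nonneg (hFnn _)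
      simp only [this]
      exact (inner s hs).symm
  -- main computation
  have lhs1 : ∫ x : ℝ, x ^ (2 * k) *
        (2 * ∫ s in Set.Ioi (0 : ℝ), gauss x (s ^ (2 * H₁)) * gauss s τ)
      = 2 * ∫ x : ℝ, ∫ s in Ioi (0:ℝ), F (x, s) := by
    rw [← integral_const_mul]
    congr 1; funext x
    rw [show (∫ s in Ioi (0:ℝ), F (x, s))
        = ∫ s in Ioi (0:ℝ), x ^ (2*k) * (gauss x (s ^ (2 * H₁)) * gauss s τ) from rfl,
      integral_const_mul]
    ring
  rw [lhs1, integral_integral_swap hInt, setIntegral_congr_fun measurableSet_Ioi inner,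
    integral_const_mul, integral_rpow_mul_gauss hτ hq']
  -- now pure algebra with Gamma and rpow
  have hGk : Real.Gamma (k:ℝ) ≠ 0 := (Real.Gamma_pos_of_pos hK).ne'
  have hGkH : Real.Gamma ((k:ℝ) * H₁) ≠ 0 := (Real.Gamma_pos_of_pos (by positivity)).ne'
  have dup1 := Real.Gamma_mul_Gamma_add_half (k:ℝ)
  have dup2 := Real.Gamma_mul_Gamma_add_half ((k:ℝ) * H₁)
  have hsπ : Real.sqrt π ≠ 0 := by positivity
  have e6 : (2 * H₁ * (k:ℝ)) / 2 = (k:ℝ) * H₁ := by ring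
  have e7 : (2 * H₁ * (k:ℝ) + 1) / 2 = (k:ℝ) * H₁ + 1/2 := by ring
  rw [e6, e7, ← hB]
  -- expand (2*τ)^(k*H₁)
  have e8 : ((2 * τ):ℝ) ^ ((k:ℝ) * H₁)
      = (2:ℝ) ^ ((k:ℝ) * H₁) * t ^ (2 * (k:ℝ) * H₁ * H₂) := by
    rw [Real.mul_rpow (by norm_num) hτ.le, hτdef, ← Real.rpow_mul ht.le]
    congr 1; ring
  rw [e8]
  -- rewrite the Gamma quotients via duplication
  have dup1' : Real.Gamma (2 * (k:ℝ)) / Real.Gamma (k:ℝ)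
      = A * (2:ℝ) ^ (2 * (k:ℝ) - 1) / Real.sqrt π := by
    have hpow : (2:ℝ) ^ ((1:ℝ) - 2 * (k:ℝ)) * (2:ℝ) ^ (2 * (k:ℝ) - 1) = 1 := by
      rw [← Real.rpow_add (by norm_num : (0:ℝ) < 2)]; norm_num
    rw [hA, div_eq_div_iff hGk hsπ]
    linear_combination (-((2:ℝ) ^ (2 * (k:ℝ) - 1))) * dup1
      - Real.Gamma (2 * (k:ℝ)) * Real.sqrt π * hpow
  have dup2' : Real.Gamma (2 * (k:ℝ) * H₁) / Real.Gamma ((k:ℝ) * H₁)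
      = B * (2:ℝ) ^ (2 * ((k:ℝ) * H₁) - 1) / Real.sqrt π := by
    have hpow : (2:ℝ) ^ ((1:ℝ) - 2 * ((k:ℝ) * H₁)) * (2:ℝ) ^ (2 * ((k:ℝ) * H₁) - 1) = 1 := by
      rw [← Real.rpow_add (by norm_num : (0:ℝ) < 2)]; norm_num
    rw [show (2 * (k:ℝ) * H₁) = 2 * ((k:ℝ) * H₁) by ring, hB,
      div_eq_div_iff hGkH hsπ]
    linear_combination (-((2:ℝ) ^ (2 * ((k:ℝ) * H₁) - 1))) * dup2
      - Real.Gamma (2 * ((k:ℝ) * H₁)) * Real.sqrt π * hpow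
  rw [dup1', dup2']
  -- final: combine powers of two
  have hπ : Real.sqrt π * Real.sqrt π = π := Real.mul_self_sqrt pi_pos.le
  have comb : ∀ a b : ℝ, (2:ℝ) ^ a * (2:ℝ) ^ b = (2:ℝ) ^ (a + b) := fun a b =>
    (Real.rpow_add (by norm_num) a b).symm
  have lhs2 : 2 * (c * ((2:ℝ) ^ ((k:ℝ) * H₁) * t ^ (2 * (k:ℝ) * H₁ * H₂) * B
        / (2 * Real.sqrt π)))
      = (2:ℝ) ^ ((k:ℝ) + (k:ℝ) * H₁) * t ^ (2 * (k:ℝ) * H₁ * H₂) * A * B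
        / (Real.sqrt π * Real.sqrt π) := by
    rw [hc, ← comb]
    field_simp
  have rhs2 : (2:ℝ) ^ ((2:ℝ) - (k:ℝ) * (1 + H₁)) * t ^ (2 * (k:ℝ) * H₁ * H₂) *
        (A * (2:ℝ) ^ (2 * (k:ℝ) - 1) / Real.sqrt π) *
        (B * (2:ℝ) ^ (2 * ((k:ℝ) * H₁) - 1) / Real.sqrt π)
      = (2:ℝ) ^ ((k:ℝ) + (k:ℝ) * H₁) * t ^ (2 * (k:ℝ) * H₁ * H₂) * A * B
        / (Real.sqrt π * Real.sqrt π) := by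
    rw [show ((k:ℝ) + (k:ℝ) * H₁)
        = ((2:ℝ) - (k:ℝ) * (1 + H₁)) + ((2 * (k:ℝ) - 1) + (2 * ((k:ℝ) * H₁) - 1)) by ring,
      ← comb, ← comb]
    field_simp
  rw [lhs2, rhs2]
end
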